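/- arXiv:1211.0666 — 12 statements merged into one kernel-verified Lean document; each statement's English description precedes it below -/
import Mathlib

section
/- Let 0 < α < π/2 and 0 < β < π/2, let u₁, u₂ : [0,T] → [−1,1] be measurable, let x : [0,T] → ℝ³ be Lipschitz with x′(t) = (F + u₁(t)G₁ + u₂(t)G₂)·x(t) a.e., and let λ : [0,T] → ℝ³ be Lipschitz with λ′(t) = −(F + u₁(t)G₁ + u₂(t)G₂)ᵀ·λ(t) a.e. Define φ₀(t) := ⟨λ(t), F·x(t)⟩, φ₁(t) := ⟨λ(t), G₁·x(t)⟩, φ₂(t) := ⟨λ(t), G₂·x(t)⟩. Then for a.e. t ∈ [0,T], the vector (φ₀, φ₁, φ₂)′(t) equals P(u₁(t),u₂(t))·(φ₀(t), φ₁(t), φ₂(t)). -/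
open MeasureTheory Matrix Real

noncomputable section

/-- The generator of rotations around the `x₁`-axis. -/
def J1 : Matrix (Fin 3) (Fin 3) ℝ := !![0,0,0; 0,0,-1; 0,1,0]

/-- The generator of rotations around the `x₂`-axis. -/
def J2 : Matrix (Fin 3) (Fin 3) ℝ := !![0,0,-1; 0,0,0; 1,0,0]

/-- The generator of rotations around the `x₃`-axis. -/
def J3 : Matrix (Fin 3) (Fin 3) ℝ := !![0,-1,0; 1,0,0; 0,0,0]

/-- The drift field `F = cos α · J₃` of the normalized Bloch-sphere system. -/
def Fm (α : ℝ) : Matrix (Fin 3) (Fin 3) ℝ := Real.cos α • J3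

/-- The first control field `G₁ = sin α sin β · J₁`. -/
def G1m (α β : ℝ) : Matrix (Fin 3) (Fin 3) ℝ := (Real.sin α * Real.sin β) • J1

/-- The second control field `G₂ = sin α cos β · J₂`. -/
def G2m (α β : ℝ) : Matrix (Fin 3) (Fin 3) ℝ := (Real.sin α * Real.cos β) • J2

/-- The matrix `P(u₁,u₂)` governing the evolution of the switching functions. -/
def Pm (α β u₁ u₂ : ℝ) : Matrix (Fin 3) (Fin 3) ℝ :=
  !![0, (Real.cos α / Real.tan β) * u₂, -(Real.cos α * Real.tan β) * u₁;
     -((Real.sin α)^2 * Real.sin β * Real.cos β / Real.cos α) * u₂, 0, Real.cos α * Real.tan β;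
     ((Real.sin α)^2 * Real.sin β * Real.cos β / Real.cos α) * u₁, -(Real.cos α / Real.tan β), 0]

lemma dot_deriv (M : Matrix (Fin 3) (Fin 3) ℝ) (x lam : ℝ → Fin 3 → ℝ)
    (x' l' : Fin 3 → ℝ) (t : ℝ) (hx : HasDerivAt x x' t) (hl : HasDerivAt lam l' t) :
    HasDerivAt (fun s => lam s ⬝ᵥ M.mulVec (x s))
      (l' ⬝ᵥ M.mulVec (x t) + lam t ⬝ᵥ M.mulVec x') t := by
  have hx' : ∀ k, HasDerivAt (fun s => x s k) (x' k) t := hasDerivAt_pi.mp hx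
  have hl' : ∀ j, HasDerivAt (fun s => lam s j) (l' j) t := hasDerivAt_pi.mp hl
  have h : HasDerivAt (fun s => ∑ j : Fin 3, lam s j * ∑ k : Fin 3, M j k * x s k)
      (∑ j : Fin 3, (l' j * (∑ k : Fin 3, M j k * x t k)
        + lam t j * ∑ k : Fin 3, M j k * x' k)) t := by
    refine HasDerivAt.fun_sum fun j _ => ?_
    exact (hl' j).mul (HasDerivAt.fun_sum fun k _ => (hx' k).const_mul (M j k))
  convert h using 1 <;>
    simp [dotProduct, Matrix.mulVec, Finset.sum_add_distrib]

theorem switching_functions_ODE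
    (α β T : ℝ) (hα : 0 < α) (hα' : α < π/2) (hβ : 0 < β) (hβ' : β < π/2)
    (u₁ u₂ : ℝ → ℝ) (hu₁m : Measurable u₁) (hu₂m : Measurable u₂)
    (hu₁ : ∀ t ∈ Set.Icc (0:ℝ) T, u₁ t ∈ Set.Icc (-1:ℝ) 1)
    (hu₂ : ∀ t ∈ Set.Icc (0:ℝ) T, u₂ t ∈ Set.Icc (-1:ℝ) 1)
    (x lam : ℝ → Fin 3 → ℝ) (Kx Kl : NNReal)
    (hx : LipschitzOnWith Kx x (Set.Icc 0 T))
    (hl : LipschitzOnWith Kl lam (Set.Icc 0 T))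
    (hxd : ∀ᵐ t ∂(volume.restrict (Set.Icc (0:ℝ) T)),
      HasDerivAt x ((Fm α + u₁ t • G1m α β + u₂ t • G2m α β).mulVec (x t)) t)
    (hld : ∀ᵐ t ∂(volume.restrict (Set.Icc (0:ℝ) T)),
      HasDerivAt lam (-(Fm α + u₁ t • G1m α β + u₂ t • G2m α β)ᵀ.mulVec (lam t)) t) :
    ∀ᵐ t ∂(volume.restrict (Set.Icc (0:ℝ) T)),
      HasDerivAt (fun s => ![lam s ⬝ᵥ (Fm α).mulVec (x s),
                             lam s ⬝ᵥ (G1m α β).mulVec (x s),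
                             lam s ⬝ᵥ (G2m α β).mulVec (x s)])
        ((Pm α β (u₁ t) (u₂ t)).mulVec
          ![lam t ⬝ᵥ (Fm α).mulVec (x t),
            lam t ⬝ᵥ (G1m α β).mulVec (x t),
            lam t ⬝ᵥ (G2m α β).mulVec (x t)]) t := by
  have hca : Real.cos α ≠ 0 :=
    ne_of_gt (Real.cos_pos_of_mem_Ioo ⟨by linarith [Real.pi_pos], hα'⟩)
  have hcb : Real.cos β ≠ 0 :=
    ne_of_gt (Real.cos_pos_of_mem_Ioo ⟨by linarith [Real.pi_pos], hβ'⟩)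
  have hsb : Real.sin β ≠ 0 :=
    ne_of_gt (Real.sin_pos_of_pos_of_lt_pi hβ (by linarith [Real.pi_pos]))
  filter_upwards [hxd, hld] with t hxt hlt
  set A := Fm α + u₁ t • G1m α β + u₂ t • G2m α β with hA
  refine hasDerivAt_pi.mpr fun i => ?_
  have tac : ∀ M : Matrix (Fin 3) (Fin 3) ℝ,
      HasDerivAt (fun s => lam s ⬝ᵥ M.mulVec (x s))
        ((-(Aᵀ.mulVec (lam t))) ⬝ᵥ M.mulVec (x t)
          + lam t ⬝ᵥ M.mulVec (A.mulVec (x t))) t :=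
    fun M => dot_deriv M x lam _ _ t hxt hlt
  have key : ∀ M : Matrix (Fin 3) (Fin 3) ℝ, ∀ c : ℝ,
      c = (-(Aᵀ.mulVec (lam t))) ⬝ᵥ M.mulVec (x t) + lam t ⬝ᵥ M.mulVec (A.mulVec (x t)) →
      HasDerivAt (fun s => lam s ⬝ᵥ M.mulVec (x s)) c t := fun M c hc => hc ▸ tac M
  fin_cases i
  · show HasDerivAt (fun s => lam s ⬝ᵥ (Fm α).mulVec (x s)) _ t
    refine key _ _ ?_
    simp only [hA, Pm, Fm, G1m, G2m, J1, J2, J3, Matrix.mulVec, dotProduct,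
      Matrix.transpose_apply, Matrix.neg_apply, Matrix.add_apply, Matrix.smul_apply,
      Matrix.cons_val', Matrix.cons_val_zero, Matrix.cons_val_one, Matrix.head_cons,
      Matrix.cons_val_fin_one, Matrix.empty_val', Matrix.head_fin_const,
      Fin.sum_univ_three, Matrix.cons_val_two, Matrix.tail_cons, Pi.neg_apply,
      Pi.add_apply, Pi.smul_apply, smul_eq_mul, Matrix.of_apply, Real.tan_eq_sin_div_cos,
      Fin.reduceFinMk, Matrix.cons_val]
    field_simp
    ring
  · show HasDerivAt (fun s => lam s ⬝ᵥ (G1m α β).mulVec (x s)) _ t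
    refine key _ _ ?_
    simp only [hA, Pm, Fm, G1m, G2m, J1, J2, J3, Matrix.mulVec, dotProduct,
      Matrix.transpose_apply, Matrix.neg_apply, Matrix.add_apply, Matrix.smul_apply,
      Matrix.cons_val', Matrix.cons_val_zero, Matrix.cons_val_one, Matrix.head_cons,
      Matrix.cons_val_fin_one, Matrix.empty_val', Matrix.head_fin_const,
      Fin.sum_univ_three, Matrix.cons_val_two, Matrix.tail_cons, Pi.neg_apply,
      Pi.add_apply, Pi.smul_apply, smul_eq_mul, Matrix.of_apply, Real.tan_eq_sin_div_cos,
      Fin.reduceFinMk, Matrix.cons_val]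
    field_simp
    ring
  · show HasDerivAt (fun s => lam s ⬝ᵥ (G2m α β).mulVec (x s)) _ t
    refine key _ _ ?_
    simp only [hA, Pm, Fm, G1m, G2m, J1, J2, J3, Matrix.mulVec, dotProduct,
      Matrix.transpose_apply, Matrix.neg_apply, Matrix.add_apply, Matrix.smul_apply,
      Matrix.cons_val', Matrix.cons_val_zero, Matrix.cons_val_one, Matrix.head_cons,
      Matrix.cons_val_fin_one, Matrix.empty_val', Matrix.head_fin_const,
      Fin.sum_univ_three, Matrix.cons_val_two, Matrix.tail_cons, Pi.neg_apply,
      Pi.add_apply, Pi.smul_apply, smul_eq_mul, Matrix.of_apply, Real.tan_eq_sin_div_cos,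
      Fin.reduceFinMk, Matrix.cons_val]
    field_simp
    ring
end
end

section
/- Let 0 < α < π/2 and 0 < β < π/2, let u₁, u₂ : [0,T] → ℝ be measurable and bounded, and let φ = (φ₀, φ₁, φ₂) : [0,T] → ℝ³ be Lipschitz with φ′(t) = P(u₁(t),u₂(t))·φ(t) for a.e. t. Then the function t ↦ φ₀(t)² + (cos²α/sin²α)·(φ₁(t)²/sin²β + φ₂(t)²/cos²β) is constant on [0,T]; in particular it equals (cos²α/sin²α)·(φ₁(0)²/sin²β + φ₂(0)²/cos²β) for all t whenever φ₀(0) = 0. -/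
open MeasureTheory Matrix Real

noncomputable section

/-- A Lipschitz function on `[a,b]` whose derivative vanishes a.e. is constant. -/
lemma my_const_of_ae_deriv_zero {g : ℝ → ℝ} {K : NNReal} {a b : ℝ}
    (hg : LipschitzOnWith K g (Set.Icc a b))
    (h : ∀ᵐ t ∂(volume.restrict (Set.Icc a b)), HasDerivAt g 0 t) :
    ∀ t ∈ Set.Icc a b, g t = g a := by
  set S := Set.Icc a b with hSdef
  have hS : MeasurableSet S := measurableSet_Icc
  rw [ae_iff, Measure.restrict_apply' hS] at h
  set E := S ∩ {t | HasDerivAt g 0 t} with hE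
  set N := S ∩ {t | ¬ HasDerivAt g 0 t} with hN
  have hNnull : volume N = 0 := by
    rw [hN, Set.inter_comm]; exact h
  have hEim : volume (g '' E) = 0 := by
    apply addHaar_image_eq_zero_of_det_fderivWithin_eq_zero volume
      (f' := fun _ => (0 : ℝ →L[ℝ] ℝ))
    · intro x hx
      have h2 := hx.2.hasFDerivAt
      have hz : ContinuousLinearMap.toSpanSingleton ℝ (0:ℝ) = 0 := by
        ext; simp
      rw [hz] at h2
      exact h2.hasFDerivWithinAt
    · intro x _
      change LinearMap.det _ = 0
      simp [ContinuousLinearMap.det]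
  have hNim : volume (g '' N) = 0 := by
    have hle := (hg.mono (Set.inter_subset_left : N ⊆ S)).hausdorffMeasure_image_le
      (d := 1) zero_le_one
    rw [MeasureTheory.hausdorffMeasure_real] at hle
    refine le_antisymm ?_ zero_le
    calc volume (g '' N) ≤ (K : ENNReal) ^ (1:ℝ) * volume N := hle
      _ = 0 := by rw [hNnull, mul_zero]
  have hSim : volume (g '' S) = 0 := by
    have hsub : g '' S ⊆ g '' E ∪ g '' N := by
      rw [← Set.image_union]
      apply Set.image_mono
      intro x hx
      by_cases hd : HasDerivAt g 0 x
      · exact Or.inl ⟨hx, hd⟩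
      · exact Or.inr ⟨hx, hd⟩
    refine le_antisymm ?_ zero_le
    calc volume (g '' S) ≤ volume (g '' E ∪ g '' N) := measure_mono hsub
      _ ≤ volume (g '' E) + volume (g '' N) := measure_union_le _ _
      _ = 0 := by rw [hEim, hNim, add_zero]
  intro t ht
  have hat : Set.Icc a t ⊆ S := Set.Icc_subset_Icc le_rfl ht.2
  have hcont : ContinuousOn g (Set.Icc a t) := hg.continuousOn.mono hat
  have h1 : Set.Icc (g a) (g t) ⊆ g '' S :=
    (intermediate_value_Icc ht.1 hcont).trans (Set.image_mono hat)
  have h2 : Set.Icc (g t) (g a) ⊆ g '' S :=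
    (intermediate_value_Icc' ht.1 hcont).trans (Set.image_mono hat)
  have v1 : volume (Set.Icc (g a) (g t)) = 0 := measure_mono_null h1 hSim
  have v2 : volume (Set.Icc (g t) (g a)) = 0 := measure_mono_null h2 hSim
  rw [Real.volume_Icc, ENNReal.ofReal_eq_zero] at v1 v2
  linarith

theorem conserved_quadratic_form
    (α β T : ℝ) (hα : 0 < α) (hα' : α < π/2) (hβ : 0 < β) (hβ' : β < π/2) (hT : 0 ≤ T)
    (u₁ u₂ : ℝ → ℝ) (hu₁m : Measurable u₁) (hu₂m : Measurable u₂)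
    (C : ℝ) (hu₁b : ∀ t ∈ Set.Icc (0:ℝ) T, |u₁ t| ≤ C)
    (hu₂b : ∀ t ∈ Set.Icc (0:ℝ) T, |u₂ t| ≤ C)
    (φ : ℝ → Fin 3 → ℝ) (K : NNReal)
    (hφ : LipschitzOnWith K φ (Set.Icc 0 T))
    (hφd : ∀ᵐ t ∂(volume.restrict (Set.Icc (0:ℝ) T)),
      HasDerivAt φ ((Pm α β (u₁ t) (u₂ t)).mulVec (φ t)) t) :
    (∀ t ∈ Set.Icc (0:ℝ) T,
      (φ t 0)^2 + ((Real.cos α)^2/(Real.sin α)^2) *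
        ((φ t 1)^2/(Real.sin β)^2 + (φ t 2)^2/(Real.cos β)^2)
      = (φ 0 0)^2 + ((Real.cos α)^2/(Real.sin α)^2) *
        ((φ 0 1)^2/(Real.sin β)^2 + (φ 0 2)^2/(Real.cos β)^2)) ∧
    (φ 0 0 = 0 → ∀ t ∈ Set.Icc (0:ℝ) T,
      (φ t 0)^2 + ((Real.cos α)^2/(Real.sin α)^2) *
        ((φ t 1)^2/(Real.sin β)^2 + (φ t 2)^2/(Real.cos β)^2)
      = ((Real.cos α)^2/(Real.sin α)^2) *
        ((φ 0 1)^2/(Real.sin β)^2 + (φ 0 2)^2/(Real.cos β)^2)) := by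
  have hπ := Real.pi_pos
  have hsα : 0 < Real.sin α := Real.sin_pos_of_pos_of_lt_pi hα (by linarith)
  have hcα : 0 < Real.cos α := Real.cos_pos_of_mem_Ioo ⟨by linarith, hα'⟩
  have hsβ : 0 < Real.sin β := Real.sin_pos_of_pos_of_lt_pi hβ (by linarith)
  have hcβ : 0 < Real.cos β := Real.cos_pos_of_mem_Ioo ⟨by linarith, hβ'⟩
  set c : ℝ := (Real.cos α)^2/(Real.sin α)^2 with hc
  have hc0 : 0 ≤ c := by positivity
  set g : ℝ → ℝ := fun t => (φ t 0)^2 + c *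
      ((φ t 1)^2/(Real.sin β)^2 + (φ t 2)^2/(Real.cos β)^2) with hgdef
  -- bound on φ
  obtain ⟨R₀, hR₀⟩ := (isCompact_Icc (a := (0:ℝ)) (b := T)).exists_bound_of_continuousOn
    hφ.continuousOn
  set R : ℝ := max R₀ 0 with hR
  have hRnn : 0 ≤ R := le_max_right _ _
  have hRb : ∀ t ∈ Set.Icc (0:ℝ) T, ∀ i, |φ t i| ≤ R := by
    intro t ht i
    calc |φ t i| = ‖φ t i‖ := rfl
      _ ≤ ‖φ t‖ := norm_le_pi_norm _ i
      _ ≤ R₀ := hR₀ t ht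
      _ ≤ R := le_max_left _ _
  set M : ℝ := 1 + c/(Real.sin β)^2 + c/(Real.cos β)^2 with hM
  have hM0 : 0 ≤ M := by positivity
  have hglip : LipschitzOnWith (Real.toNNReal (M * (2*R) * K)) g (Set.Icc 0 T) := by
    rw [lipschitzOnWith_iff_dist_le_mul]
    intro x hx y hy
    have hD : dist (φ x) (φ y) ≤ K * dist x y := hφ.dist_le_mul x hx y hy
    set D : ℝ := dist (φ x) (φ y) with hDdef
    have hDnn : 0 ≤ D := dist_nonneg
    have hdiff : ∀ i, |φ x i - φ y i| ≤ D := by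
      intro i
      calc |φ x i - φ y i| = dist (φ x i) (φ y i) := (Real.dist_eq _ _).symm
        _ ≤ D := dist_le_pi_dist _ _ i
    have hsq : ∀ i, |(φ x i)^2 - (φ y i)^2| ≤ 2*R*D := by
      intro i
      have h1 : (φ x i)^2 - (φ y i)^2 = (φ x i - φ y i) * (φ x i + φ y i) := by ring
      rw [h1, abs_mul]
      have h2 : |φ x i + φ y i| ≤ 2*R := by
        calc |φ x i + φ y i| ≤ |φ x i| + |φ y i| := abs_add_le _ _
          _ ≤ R + R := add_le_add (hRb x hx i) (hRb y hy i)
          _ = 2*R := by ring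
      calc |φ x i - φ y i| * |φ x i + φ y i| ≤ D * (2*R) :=
            mul_le_mul (hdiff i) h2 (abs_nonneg _) hDnn
        _ = 2*R*D := by ring
    have key : |g x - g y| ≤ M * (2*R*D) := by
      have e : g x - g y = ((φ x 0)^2 - (φ y 0)^2)
          + (c/(Real.sin β)^2) * ((φ x 1)^2 - (φ y 1)^2)
          + (c/(Real.cos β)^2) * ((φ x 2)^2 - (φ y 2)^2) := by
        simp only [hgdef]; ring
      rw [e]
      calc |((φ x 0)^2 - (φ y 0)^2)
          + (c/(Real.sin β)^2) * ((φ x 1)^2 - (φ y 1)^2)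
          + (c/(Real.cos β)^2) * ((φ x 2)^2 - (φ y 2)^2)|
          ≤ |(φ x 0)^2 - (φ y 0)^2|
            + (c/(Real.sin β)^2) * |(φ x 1)^2 - (φ y 1)^2|
            + (c/(Real.cos β)^2) * |(φ x 2)^2 - (φ y 2)^2| := by
            refine (abs_add_le _ _).trans (add_le_add ((abs_add_le _ _).trans (add_le_add le_rfl ?_)) ?_)
            · rw [abs_mul, abs_of_nonneg (by positivity : (0:ℝ) ≤ c/(Real.sin β)^2)]
            · rw [abs_mul, abs_of_nonneg (by positivity : (0:ℝ) ≤ c/(Real.cos β)^2)]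
        _ ≤ 2*R*D + (c/(Real.sin β)^2) * (2*R*D) + (c/(Real.cos β)^2) * (2*R*D) := by
            gcongr
            · exact hsq 0
            · exact hsq 1
            · exact hsq 2
        _ = M * (2*R*D) := by rw [hM]; ring
    have : dist (g x) (g y) ≤ M * (2*R) * (K * dist x y) := by
      rw [Real.dist_eq]
      calc |g x - g y| ≤ M * (2*R*D) := key
        _ = M * (2*R) * D := by ring
        _ ≤ M * (2*R) * (K * dist x y) := by
            apply mul_le_mul_of_nonneg_left hD (by positivity)
    calc dist (g x) (g y) ≤ M * (2*R) * (K * dist x y) := this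
      _ = (M * (2*R) * K) * dist x y := by ring
      _ ≤ (Real.toNNReal (M * (2*R) * K) : ℝ) * dist x y := by
          apply mul_le_mul_of_nonneg_right (Real.le_coe_toNNReal _) dist_nonneg
  -- a.e. zero derivative of g
  have hgd : ∀ᵐ t ∂(volume.restrict (Set.Icc (0:ℝ) T)), HasDerivAt g 0 t := by
    filter_upwards [hφd] with t ht
    have hcomp := hasDerivAt_pi.mp ht
    set v : Fin 3 → ℝ := (Pm α β (u₁ t) (u₂ t)).mulVec (φ t) with hv
    have h0 := (hcomp 0).pow 2
    have h1 := ((hcomp 1).pow 2).div_const ((Real.sin β)^2)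
    have h2 := ((hcomp 2).pow 2).div_const ((Real.cos β)^2)
    have hsum := h0.add ((h1.add h2).const_mul c)
    have hv0 : v 0 = (Real.cos α / Real.tan β) * u₂ t * φ t 1
        + (-(Real.cos α * Real.tan β) * u₁ t) * φ t 2 := by
      simp [hv, Pm, Matrix.mulVec, dotProduct, Fin.sum_univ_three]
    have hv1 : v 1 = (-((Real.sin α)^2 * Real.sin β * Real.cos β / Real.cos α) * u₂ t) * φ t 0
        + (Real.cos α * Real.tan β) * φ t 2 := by
      simp [hv, Pm, Matrix.mulVec, dotProduct, Fin.sum_univ_three]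
    have hv2 : v 2 = ((Real.sin α)^2 * Real.sin β * Real.cos β / Real.cos α) * u₁ t * φ t 0
        + (-(Real.cos α / Real.tan β)) * φ t 1 := by
      simp [hv, Pm, Matrix.mulVec, dotProduct, Fin.sum_univ_three]
    have hz : (2:ℕ) * φ t 0 ^ (2-1) * v 0
        + c * ((2:ℕ) * φ t 1 ^ (2-1) * v 1 / (Real.sin β)^2
             + (2:ℕ) * φ t 2 ^ (2-1) * v 2 / (Real.cos β)^2) = 0 := by
      rw [hv0, hv1, hv2, hc]
      have htβ : Real.tan β = Real.sin β / Real.cos β := Real.tan_eq_sin_div_cos β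
      rw [htβ]
      field_simp
      ring
    rw [hgdef]
    have := hz ▸ hsum
    exact this
  -- conclude
  have hconst := my_const_of_ae_deriv_zero hglip hgd
  constructor
  · intro t ht
    have := hconst t ht
    simpa [hgdef, hc] using this
  · intro h00 t ht
    have := hconst t ht
    rw [hgdef] at this
    simp only at this
    rw [h00] at this
    simpa [hc] using this
end
end

section
/- Let 0 < α < π/2, 0 < β < π/2, let u₁, u₂ : [a,b] → [−1,1] be measurable, let x : [a,b] → ℝ³ be Lipschitz with x′(t) = (F + u₁(t)G₁ + u₂(t)G₂)·x(t) a.e. and ‖x(t)‖ = 1 for all t, and let λ : [a,b] → ℝ³ be Lipschitz with λ′(t) = −(F + u₁(t)G₁ + u₂(t)G₂)ᵀ·λ(t) a.e., λ(t) ≠ 0 and ⟨λ(t), x(t)⟩ = 0 for all t. If ⟨λ(t), G₁·x(t)⟩ = 0 and ⟨λ(t), G₂·x(t)⟩ = 0 for every t ∈ [a,b], then the third coordinate x₃(t) = 0 for every t ∈ [a,b], and u₁(t) = 0 and u₂(t) = 0 for almost every t ∈ [a,b]. -/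
open MeasureTheory Matrix Real

noncomputable section

theorem totally_singular_support
    (α β a b : ℝ) (hα : 0 < α) (hα' : α < π/2) (hβ : 0 < β) (hβ' : β < π/2) (hab : a ≤ b)
    (u₁ u₂ : ℝ → ℝ) (hu₁m : Measurable u₁) (hu₂m : Measurable u₂)
    (hu₁ : ∀ t ∈ Set.Icc a b, u₁ t ∈ Set.Icc (-1:ℝ) 1)
    (hu₂ : ∀ t ∈ Set.Icc a b, u₂ t ∈ Set.Icc (-1:ℝ) 1)
    (x lam : ℝ → Fin 3 → ℝ) (Kx Kl : NNReal)
    (hx : LipschitzOnWith Kx x (Set.Icc a b))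
    (hl : LipschitzOnWith Kl lam (Set.Icc a b))
    (hxd : ∀ᵐ t ∂(volume.restrict (Set.Icc a b)),
      HasDerivAt x ((Fm α + u₁ t • G1m α β + u₂ t • G2m α β).mulVec (x t)) t)
    (hld : ∀ᵐ t ∂(volume.restrict (Set.Icc a b)),
      HasDerivAt lam (-(Fm α + u₁ t • G1m α β + u₂ t • G2m α β)ᵀ.mulVec (lam t)) t)
    (hsphere : ∀ t ∈ Set.Icc a b, (x t 0)^2 + (x t 1)^2 + (x t 2)^2 = 1)
    (hlne : ∀ t ∈ Set.Icc a b, lam t ≠ 0)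
    (hlx : ∀ t ∈ Set.Icc a b, lam t ⬝ᵥ x t = 0)
    (hφ1 : ∀ t ∈ Set.Icc a b, lam t ⬝ᵥ (G1m α β).mulVec (x t) = 0)
    (hφ2 : ∀ t ∈ Set.Icc a b, lam t ⬝ᵥ (G2m α β).mulVec (x t) = 0) :
    (∀ t ∈ Set.Icc a b, x t 2 = 0) ∧
    (∀ᵐ t ∂(volume.restrict (Set.Icc a b)), u₁ t = 0 ∧ u₂ t = 0) := by
  have hs1 : 0 < Real.sin α * Real.sin β :=
    mul_pos (Real.sin_pos_of_pos_of_lt_pi hα (by linarith [Real.pi_pos]))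
      (Real.sin_pos_of_pos_of_lt_pi hβ (by linarith [Real.pi_pos]))
  have hs2 : 0 < Real.sin α * Real.cos β :=
    mul_pos (Real.sin_pos_of_pos_of_lt_pi hα (by linarith [Real.pi_pos]))
      (Real.cos_pos_of_mem_Ioo ⟨by linarith [Real.pi_pos], hβ'⟩)
  -- pointwise algebraic consequences
  have key : ∀ t ∈ Set.Icc a b, x t 2 = 0 ∧ lam t 2 = 0 := by
    intro t ht
    have e1 := hφ1 t ht
    have e2 := hφ2 t ht
    have e3 := hlx t ht
    have e4 := hsphere t ht
    simp [G1m, G2m, J1, J2, Matrix.mulVec, dotProduct, Fin.sum_univ_three,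
      Matrix.vecHead, Matrix.vecTail] at e1 e2 e3
    -- from e1 : λ₁ x₂ = λ₂ x₁ (times s1), e2 : λ₀ x₂ = λ₂ x₀ (times s2)
    have f1 : lam t 1 * x t 2 = lam t 2 * x t 1 := by
      have h : (Real.sin α * Real.sin β) * (lam t 1 * x t 2 - lam t 2 * x t 1) = 0 := by
        linear_combination -e1
      rcases mul_eq_zero.mp h with h' | h'
      · exact absurd h' (ne_of_gt hs1)
      · linarith
    have f2 : lam t 0 * x t 2 = lam t 2 * x t 0 := by
      have h : (Real.sin α * Real.cos β) * (lam t 0 * x t 2 - lam t 2 * x t 0) = 0 := by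
        linear_combination -e2
      rcases mul_eq_zero.mp h with h' | h'
      · exact absurd h' (ne_of_gt hs2)
      · linarith
    have hl2 : lam t 2 = 0 := by
      linear_combination (-(lam t 2)) * e4 - x t 0 * f2 - x t 1 * f1 + x t 2 * e3
    obtain ⟨i, hi⟩ := Function.ne_iff.mp (hlne t ht)
    have hx2 : x t 2 = 0 := by
      fin_cases i
      · have : lam t 0 * x t 2 = 0 := by rw [f2, hl2]; ring
        rcases mul_eq_zero.mp this with h | h
        · exact absurd h hi
        · exact h
      · have : lam t 1 * x t 2 = 0 := by rw [f1, hl2]; ring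
        rcases mul_eq_zero.mp this with h | h
        · exact absurd h hi
        · exact h
      · exact absurd hl2 hi
    exact ⟨hx2, hl2⟩
  have hx2all : ∀ t ∈ Set.Icc a b, x t 2 = 0 := fun t ht => (key t ht).1
  have hl2all : ∀ t ∈ Set.Icc a b, lam t 2 = 0 := fun t ht => (key t ht).2
  refine ⟨hx2all, ?_⟩
  -- a.e. membership in the open interval
  have hmem : ∀ᵐ t ∂(volume.restrict (Set.Icc a b)), t ∈ Set.Ioo a b := by
    have h1 : ∀ᵐ t ∂(volume.restrict (Set.Icc a b)), t ∈ Set.Icc a b :=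
      ae_restrict_mem measurableSet_Icc
    have h0 : (volume.restrict (Set.Icc a b)) {a, b} = 0 := by
      rw [Measure.restrict_apply (by measurability)]
      exact measure_mono_null Set.inter_subset_left (Set.Finite.measure_zero (Set.toFinite _) _)
    have h2 : ∀ᵐ t ∂(volume.restrict (Set.Icc a b)), t ∈ ({a, b} : Set ℝ)ᶜ :=
      compl_mem_ae_iff.mpr h0
    filter_upwards [h1, h2] with t ht hnab
    rcases ht with ⟨h1, h2⟩
    constructor
    · rcases lt_or_eq_of_le h1 with h | h
      · exact h
      · exact absurd (Or.inl h.symm) hnab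
    · rcases lt_or_eq_of_le h2 with h | h
      · exact h
      · exact absurd (Or.inr h) hnab
  filter_upwards [hxd, hld, hmem] with t hxt hlt htI
  have ht : t ∈ Set.Icc a b := Set.Ioo_subset_Icc_self htI
  -- derivative of x · e₂ and lam · e₂ at t is zero since these vanish on a nbhd
  have hnbhd : Set.Ioo a b ∈ nhds t := Ioo_mem_nhds htI.1 htI.2
  have hx2d : HasDerivAt (fun s => x s 2)
      (((Fm α + u₁ t • G1m α β + u₂ t • G2m α β).mulVec (x t)) 2) t :=
    hasDerivAt_pi.mp hxt 2
  have hl2d : HasDerivAt (fun s => lam s 2)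
      ((-(Fm α + u₁ t • G1m α β + u₂ t • G2m α β)ᵀ.mulVec (lam t)) 2) t :=
    hasDerivAt_pi.mp hlt 2
  have hx2z : HasDerivAt (fun s => x s 2) 0 t := by
    refine (hasDerivAt_const t (0:ℝ)).congr_of_eventuallyEq ?_
    filter_upwards [hnbhd] with s hs
    exact hx2all s (Set.Ioo_subset_Icc_self hs)
  have hl2z : HasDerivAt (fun s => lam s 2) 0 t := by
    refine (hasDerivAt_const t (0:ℝ)).congr_of_eventuallyEq ?_
    filter_upwards [hnbhd] with s hs
    exact hl2all s (Set.Ioo_subset_Icc_self hs)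
  have eqA : ((Fm α + u₁ t • G1m α β + u₂ t • G2m α β).mulVec (x t)) 2 = 0 :=
    hx2d.unique hx2z
  have eqB : ((-(Fm α + u₁ t • G1m α β + u₂ t • G2m α β)ᵀ.mulVec (lam t)) 2) = 0 :=
    hl2d.unique hl2z
  simp [Fm, G1m, G2m, J1, J2, J3, Matrix.mulVec, dotProduct, Fin.sum_univ_three,
    Matrix.vecHead, Matrix.vecTail, Matrix.transpose] at eqA eqB
  -- eqA : u₂ t * s2 * x₀ + u₁ t * s1 * x₁ = 0
  -- eqB : u₁ t * s1 * λ₁ + u₂ t * s2 * λ₀ = 0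
  have e3 := hlx t ht
  simp [dotProduct, Fin.sum_univ_three] at e3
  have e4 := hsphere t ht
  have hx2 := hx2all t ht
  have hl2 := hl2all t ht
  rw [hx2] at e4
  rw [hl2] at e3
  -- orthogonality in the plane: λ₀x₀ + λ₁x₁ = 0, x₀² + x₁² = 1
  set x0 := x t 0; set x1 := x t 1; set l0 := lam t 0; set l1 := lam t 1
  have hlpos : 0 < l0 ^ 2 + l1 ^ 2 := by
    rcases Function.ne_iff.mp (hlne t ht) with ⟨i, hi⟩
    have : l0 ≠ 0 ∨ l1 ≠ 0 := by
      fin_cases i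
      · exact Or.inl hi
      · exact Or.inr hi
      · exact absurd hl2 hi
    rcases this with h | h <;> positivity
  have hd2 : (x1 * l0 - x0 * l1) ^ 2 = l0 ^ 2 + l1 ^ 2 := by nlinarith [e3, e4]
  have hdne : x1 * l0 - x0 * l1 ≠ 0 := by
    intro h
    rw [h] at hd2
    simp at hd2
    linarith
  set s1 := Real.sin α * Real.sin β
  set s2 := Real.sin α * Real.cos β
  have hp : u₁ t * s1 * (x1 * l0 - x0 * l1) = 0 := by linear_combination l0 * eqA - x0 * eqB
  have hq : u₂ t * s2 * (x1 * l0 - x0 * l1) = 0 := by linear_combination x1 * eqB - l1 * eqA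
  constructor
  · rcases mul_eq_zero.mp hp with h | h
    · rcases mul_eq_zero.mp h with h' | h'
      · exact h'
      · exact absurd h' (ne_of_gt hs1)
    · exact absurd h hdne
  · rcases mul_eq_zero.mp hq with h | h
    · rcases mul_eq_zero.mp h with h' | h'
      · exact h'
      · exact absurd h' (ne_of_gt hs2)
    · exact absurd h hdne
end
end

section
/- Let 0 < α < π/2 and 0 < β < π/2, let u₁, u₂ : [0,T] → [−1,1] be measurable, let x : [0,T] → ℝ³ be Lipschitz with x′(t) = (F + u₁(t)G₁ + u₂(t)G₂)·x(t) a.e. and x(0) = N, and let λ : [0,T] → ℝ³ be Lipschitz with λ′(t) = −(F + u₁(t)G₁ + u₂(t)G₂)ᵀ·λ(t) a.e. and ⟨λ(0), N⟩ = 0. Suppose that for a.e. t ∈ [0,T] one has u₁(t)·⟨λ(t), G₁·x(t)⟩ = |⟨λ(t), G₁·x(t)⟩|, u₂(t)·⟨λ(t), G₂·x(t)⟩ = |⟨λ(t), G₂·x(t)⟩|, and ⟨λ(t), (F + u₁(t)G₁ + u₂(t)G₂)·x(t)⟩ = 0. Then λ(0) = 0. (Hence there is no abnormal extremal with never-vanishing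 covector starting from the north pole.) -/
open MeasureTheory Matrix Real

noncomputable section

/-- The north pole of the Bloch sphere. -/
def Npole : Fin 3 → ℝ := ![0, 0, 1]

theorem no_abnormal_extremals_from_north_pole
    (α β T : ℝ) (hα : 0 < α) (hα' : α < π/2) (hβ : 0 < β) (hβ' : β < π/2) (hT : 0 < T)
    (u₁ u₂ : ℝ → ℝ) (hu₁m : Measurable u₁) (hu₂m : Measurable u₂)
    (hu₁ : ∀ t ∈ Set.Icc (0:ℝ) T, u₁ t ∈ Set.Icc (-1:ℝ) 1)
    (hu₂ : ∀ t ∈ Set.Icc (0:ℝ) T, u₂ t ∈ Set.Icc (-1:ℝ) 1)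
    (x lam : ℝ → Fin 3 → ℝ) (Kx Kl : NNReal)
    (hx : LipschitzOnWith Kx x (Set.Icc 0 T))
    (hl : LipschitzOnWith Kl lam (Set.Icc 0 T))
    (hxd : ∀ᵐ t ∂(volume.restrict (Set.Icc (0:ℝ) T)),
      HasDerivAt x ((Fm α + u₁ t • G1m α β + u₂ t • G2m α β).mulVec (x t)) t)
    (hld : ∀ᵐ t ∂(volume.restrict (Set.Icc (0:ℝ) T)),
      HasDerivAt lam (-(Fm α + u₁ t • G1m α β + u₂ t • G2m α β)ᵀ.mulVec (lam t)) t)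
    (hx0 : x 0 = Npole)
    (hl0 : lam 0 ⬝ᵥ Npole = 0)
    (hmax1 : ∀ᵐ t ∂(volume.restrict (Set.Icc (0:ℝ) T)),
      u₁ t * (lam t ⬝ᵥ (G1m α β).mulVec (x t)) = |lam t ⬝ᵥ (G1m α β).mulVec (x t)|)
    (hmax2 : ∀ᵐ t ∂(volume.restrict (Set.Icc (0:ℝ) T)),
      u₂ t * (lam t ⬝ᵥ (G2m α β).mulVec (x t)) = |lam t ⬝ᵥ (G2m α β).mulVec (x t)|)
    (hham : ∀ᵐ t ∂(volume.restrict (Set.Icc (0:ℝ) T)),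
      lam t ⬝ᵥ (Fm α + u₁ t • G1m α β + u₂ t • G2m α β).mulVec (x t) = 0) :
    lam 0 = 0 := by
  set μ := volume.restrict (Set.Icc (0:ℝ) T) with hμ
  set f : ℝ → ℝ := fun t =>
    lam t ⬝ᵥ (Fm α).mulVec (x t) + |lam t ⬝ᵥ (G1m α β).mulVec (x t)|
      + |lam t ⬝ᵥ (G2m α β).mulVec (x t)| with hf
  -- f vanishes a.e.
  have hfz : ∀ᵐ t ∂μ, f t = 0 := by
    filter_upwards [hmax1, hmax2, hham] with t h1 h2 h3
    have hexp : lam t ⬝ᵥ (Fm α + u₁ t • G1m α β + u₂ t • G2m α β).mulVec (x t)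
        = lam t ⬝ᵥ (Fm α).mulVec (x t) + u₁ t * (lam t ⬝ᵥ (G1m α β).mulVec (x t))
          + u₂ t * (lam t ⬝ᵥ (G2m α β).mulVec (x t)) := by
      simp [Matrix.add_mulVec, Matrix.smul_mulVec, dotProduct_add,
        dotProduct_smul, smul_eq_mul]
    rw [hexp] at h3
    simp only [hf]
    rw [← h1, ← h2]
    linarith
  -- f continuous on [0,T]
  have hxc := hx.continuousOn
  have hlc := hl.continuousOn
  have hcomp : ∀ (M : Matrix (Fin 3) (Fin 3) ℝ),
      ContinuousOn (fun t => lam t ⬝ᵥ M.mulVec (x t)) (Set.Icc (0:ℝ) T) := by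
    intro M
    have h1 : ∀ i, ContinuousOn (fun t => lam t i) (Set.Icc (0:ℝ) T) :=
      fun i => (continuous_apply i).comp_continuousOn hlc
    have h2 : ∀ i, ContinuousOn (fun t => x t i) (Set.Icc (0:ℝ) T) :=
      fun i => (continuous_apply i).comp_continuousOn hxc
    simp only [dotProduct, Matrix.mulVec, Fin.sum_univ_three]
    exact (((((h1 0).mul (((continuousOn_const.mul (h2 0)).add
        (continuousOn_const.mul (h2 1))).add (continuousOn_const.mul (h2 2)))).add
      ((h1 1).mul (((continuousOn_const.mul (h2 0)).add
        (continuousOn_const.mul (h2 1))).add (continuousOn_const.mul (h2 2))))).add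
      ((h1 2).mul (((continuousOn_const.mul (h2 0)).add
        (continuousOn_const.mul (h2 1))).add (continuousOn_const.mul (h2 2))))))
  have hfc : ContinuousOn f (Set.Icc (0:ℝ) T) :=
    ((hcomp (Fm α)).add ((hcomp (G1m α β)).abs)).add ((hcomp (G2m α β)).abs)
  -- hence f 0 = 0
  have h0mem : (0:ℝ) ∈ Set.Icc (0:ℝ) T := ⟨le_refl 0, hT.le⟩
  have hf0 : f 0 = 0 := by
    by_contra hne
    have hcw : ContinuousWithinAt f (Set.Icc (0:ℝ) T) 0 := hfc 0 h0mem
    obtain ⟨δ, hδ, hδ'⟩ := Metric.continuousWithinAt_iff.mp hcw (|f 0|) (abs_pos.mpr hne)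
    set ε := min T (δ/2) with hε
    have hεpos : 0 < ε := lt_min hT (by linarith)
    have hεT : ε ≤ T := min_le_left _ _
    have hsub : ∀ t ∈ Set.Icc (0:ℝ) ε, f t ≠ 0 := by
      intro t ht
      have htT : t ∈ Set.Icc (0:ℝ) T := ⟨ht.1, ht.2.trans hεT⟩
      have hdist : dist t 0 < δ := by
        rw [Real.dist_eq, sub_zero, abs_of_nonneg ht.1]
        have : t ≤ δ/2 := ht.2.trans (min_le_right _ _)
        linarith
      have := hδ' htT hdist
      rw [Real.dist_eq] at this
      intro h
      rw [h, zero_sub, abs_neg] at this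
      exact lt_irrefl _ this
    have h0 : μ {t | ¬ f t = 0} = 0 := by
      rw [ae_iff] at hfz; exact hfz
    have hle : μ (Set.Icc 0 ε) ≤ μ {t | ¬ f t = 0} :=
      measure_mono (fun t ht => hsub t ht)
    rw [h0] at hle
    have heq : μ (Set.Icc 0 ε) = ENNReal.ofReal ε := by
      rw [hμ, Measure.restrict_apply measurableSet_Icc,
        Set.inter_eq_left.mpr (Set.Icc_subset_Icc le_rfl hεT), Real.volume_Icc, sub_zero]
    rw [heq] at hle
    simp only [nonpos_iff_eq_zero, ENNReal.ofReal_eq_zero] at hle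
    linarith
  -- evaluate f 0
  have hsα : 0 < Real.sin α := Real.sin_pos_of_pos_of_lt_pi hα (by linarith [Real.pi_pos])
  have hsβ : 0 < Real.sin β := Real.sin_pos_of_pos_of_lt_pi hβ (by linarith [Real.pi_pos])
  have hcβ : 0 < Real.cos β := Real.cos_pos_of_mem_Ioo ⟨by linarith, hβ'⟩
  have e0 : lam 0 ⬝ᵥ (Fm α).mulVec (x 0) = 0 := by
    rw [hx0]
    simp [Fm, J3, Npole, Matrix.mulVec, dotProduct, Fin.sum_univ_three]
  have e1 : lam 0 ⬝ᵥ (G1m α β).mulVec (x 0) = -(Real.sin α * Real.sin β) * lam 0 1 := by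
    rw [hx0]
    simp [G1m, J1, Npole, Matrix.mulVec, dotProduct, Fin.sum_univ_three,
      Matrix.vecHead, Matrix.vecTail]
    ring
  have e2 : lam 0 ⬝ᵥ (G2m α β).mulVec (x 0) = -(Real.sin α * Real.cos β) * lam 0 0 := by
    rw [hx0]
    simp [G2m, J2, Npole, Matrix.mulVec, dotProduct, Fin.sum_univ_three,
      Matrix.vecHead, Matrix.vecTail]
    ring
  have hval : lam 0 ⬝ᵥ (Fm α).mulVec (x 0) + |lam 0 ⬝ᵥ (G1m α β).mulVec (x 0)|
      + |lam 0 ⬝ᵥ (G2m α β).mulVec (x 0)| = 0 := hf0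
  rw [e0, e1, e2, zero_add] at hval
  have habs1 : |(-(Real.sin α * Real.sin β) * lam 0 1)| = 0 := by
    have h1 := abs_nonneg (-(Real.sin α * Real.sin β) * lam 0 1)
    have h2 := abs_nonneg (-(Real.sin α * Real.cos β) * lam 0 0)
    linarith [hval]
  have habs2 : |(-(Real.sin α * Real.cos β) * lam 0 0)| = 0 := by
    have h1 := abs_nonneg (-(Real.sin α * Real.sin β) * lam 0 1)
    have h2 := abs_nonneg (-(Real.sin α * Real.cos β) * lam 0 0)
    linarith [hval]
  rw [abs_eq_zero] at habs1 habs2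
  have hl1 : lam 0 1 = 0 := by
    rcases mul_eq_zero.mp habs1 with h | h
    · exfalso; have : Real.sin α * Real.sin β > 0 := mul_pos hsα hsβ; linarith [neg_eq_zero.mp h]
    · exact h
  have hl00 : lam 0 0 = 0 := by
    rcases mul_eq_zero.mp habs2 with h | h
    · exfalso; have : Real.sin α * Real.cos β > 0 := mul_pos hsα hcβ; linarith [neg_eq_zero.mp h]
    · exact h
  have hl2 : lam 0 2 = 0 := by
    have : lam 0 ⬝ᵥ Npole = lam 0 2 := by
      simp [Npole, dotProduct, Fin.sum_univ_three]
    rw [this] at hl0; exact hl0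
  funext i
  fin_cases i
  · exact hl00
  · exact hl1
  · exact hl2
end
end

section
/- Let 0 < α < π/4, 0 < β ≤ π/4, θ ∈ ℝ, and set λ₀ := −sin α·(sin β·|sin θ| + cos β·|cos θ|). Let φ = (φ₀, φ₁, φ₂) : [0,T] → ℝ³ be continuous and satisfy, for every t ∈ [0,T], both φ₀(t)² + (cos²α/sin²α)·(φ₁(t)²/sin²β + φ₂(t)²/cos²β) = cos²α and φ₀(t) + |φ₁(t)| + |φ₂(t)| + λ₀ = 0. Then there is no t ∈ [0,T] with φ₁(t) = 0 and φ₂(t) = 0. -/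
open Real

theorem no_connection_to_totally_singular
    (α β θ T : ℝ) (hα : 0 < α) (hα' : α < π/4) (hβ : 0 < β) (hβ' : β ≤ π/4)
    (lam₀ : ℝ)
    (hlam₀ : lam₀ = -Real.sin α * (Real.sin β * |Real.sin θ| + Real.cos β * |Real.cos θ|))
    (φ : ℝ → Fin 3 → ℝ) (hφc : ContinuousOn φ (Set.Icc 0 T))
    (hquad : ∀ t ∈ Set.Icc (0:ℝ) T,
      (φ t 0)^2 + ((Real.cos α)^2/(Real.sin α)^2) *
        ((φ t 1)^2/(Real.sin β)^2 + (φ t 2)^2/(Real.cos β)^2) = (Real.cos α)^2)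
    (hham : ∀ t ∈ Set.Icc (0:ℝ) T, φ t 0 + |φ t 1| + |φ t 2| + lam₀ = 0) :
    ¬ ∃ t ∈ Set.Icc (0:ℝ) T, φ t 1 = 0 ∧ φ t 2 = 0 := by
  rintro ⟨t, ht, h1, h2⟩
  have hq := hquad t ht
  have hh := hham t ht
  rw [h1, h2] at hq hh
  simp only [abs_zero] at hh
  have hsq : (φ t 0)^2 = (Real.cos α)^2 := by
    have : ((0:ℝ))^2/(Real.sin β)^2 + ((0:ℝ))^2/(Real.cos β)^2 = 0 := by simp
    rw [this] at hq; linarith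
  -- bounds on the trig quantities
  have hπ : (0:ℝ) < π := Real.pi_pos
  have hα2 : α < π/2 := by linarith
  have hsα : 0 < Real.sin α := Real.sin_pos_of_pos_of_lt_pi hα (by linarith)
  have hcα : 0 < Real.cos α := Real.cos_pos_of_mem_Ioo ⟨by linarith, hα2⟩
  have hsβ : 0 ≤ Real.sin β := Real.sin_nonneg_of_nonneg_of_le_pi (le_of_lt hβ) (by linarith)
  have hcβ : 0 ≤ Real.cos β := Real.cos_nonneg_of_mem_Icc ⟨by linarith, by linarith⟩
  have hsc : Real.sin α < Real.cos α := by
    rw [← Real.sin_pi_div_two_sub]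
    exact Real.strictMonoOn_sin ⟨by linarith, by linarith⟩ ⟨by linarith, by linarith⟩ (by linarith)
  set S : ℝ := Real.sin β * |Real.sin θ| + Real.cos β * |Real.cos θ| with hS
  have hS0 : 0 ≤ S := by positivity
  have hS1 : S^2 ≤ 1 := by
    have h1 := Real.sin_sq_add_cos_sq θ
    have h2 := Real.sin_sq_add_cos_sq β
    have a1 : |Real.sin θ|^2 = (Real.sin θ)^2 := sq_abs _
    have a2 : |Real.cos θ|^2 = (Real.cos θ)^2 := sq_abs _
    nlinarith [sq_nonneg (Real.sin β * |Real.cos θ| - Real.cos β * |Real.sin θ|)]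
  have hφ0 : φ t 0 = Real.sin α * S := by rw [hlam₀] at hh; linarith
  nlinarith [sq_nonneg S, mul_nonneg hsα.le hS0]
end

section
/- Let 0 < α < π/4, 0 < β ≤ π/4, θ ∈ ℝ, and set λ₀ := −sin α·(sin β·|sin θ| + cos β·|cos θ|). Let u₁, u₂ : [0,T] → [−1,1] be measurable and let φ = (φ₀, φ₁, φ₂) : [0,T] → ℝ³ be Lipschitz with φ′(t) = P(u₁(t),u₂(t))·φ(t) a.e., uᵢ(t)·φᵢ(t) = |φᵢ(t)| a.e. for i = 1,2, and such that for all t: φ₀(t)² + (cos²α/sin²α)·(φ₁(t)²/sin²β + φ₂(t)²/cos²β) = cos²α and φ₀(t) + |φ₁(t)| + |φ₂(t)| + λ₀ = 0. Then there is no nondegenerate interval [a,b] ⊆ [0,T] on which φ₂ vanishes identically, and likewise none on which φ₁ vanishes identically. -/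
open MeasureTheory Matrix Real

noncomputable section

lemma alg_contra (sa ca s lam₀ p0 x : ℝ) (h0sa : 0 < sa) (hac : sa < ca)
    (hs : 0 < s) (hlam : lam₀^2 ≤ sa^2)
    (hquad : sa^2*s^2*p0^2 + ca^2*x^2 = ca^2*(sa^2*s^2))
    (hham : p0 + x + lam₀ = 0)
    (hcase : x = 0 ∨ sa^2*s^2*p0 = ca^2*x) : False := by
  have hca : 0 < ca := h0sa.trans hac
  have hD : 0 < sa^2*s^2 := by positivity
  rcases hcase with hx | hp0
  · subst hx
    have hpq : p0^2 = ca^2 := by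
      have := mul_left_cancel₀ hD.ne' (by linear_combination hquad :
        sa^2*s^2*p0^2 = sa^2*s^2*ca^2)
      linarith
    have hp : p0 = -lam₀ := by linarith
    have hsq : sa^2 < ca^2 := by nlinarith
    have : lam₀^2 = ca^2 := by rw [hp] at hpq; linarith [hpq, neg_sq lam₀]
    linarith
  · have h1 : ca^2*x + (sa^2*s^2)*x + (sa^2*s^2)*lam₀ = 0 := by
      linear_combination (sa^2*s^2)*hham - hp0
    have h2 : ca^2*(x^2*(ca^2+sa^2*s^2)) = ca^2*((sa^2*s^2)^2) := by
      linear_combination (sa^2*s^2)*hquad - (sa^2*s^2*p0 + ca^2*x)*hp0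
    have h2' : x^2*(ca^2+sa^2*s^2) = (sa^2*s^2)^2 :=
      mul_left_cancel₀ (by positivity) h2
    have h3 : lam₀^2 * (sa^2*s^2)^2 = (ca^2+sa^2*s^2)^2 * x^2 := by
      linear_combination (sa^2*s^2*lam₀ - (ca^2+sa^2*s^2)*x)*h1
    have h4 : lam₀^2 * (sa^2*s^2)^2 = (ca^2+sa^2*s^2) * (sa^2*s^2)^2 := by
      linear_combination h3 + (ca^2+sa^2*s^2)*h2'
    have h5 : lam₀^2 = ca^2+sa^2*s^2 :=
      mul_right_cancel₀ (by positivity) h4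
    nlinarith

lemma exists_point {T a b : ℝ} (hab : a < b) (hsub : Set.Icc a b ⊆ Set.Icc 0 T)
    {P : ℝ → Prop} (hP : ∀ᵐ t ∂(volume.restrict (Set.Icc (0:ℝ) T)), P t) :
    ∃ t ∈ Set.Ioo a b, P t := by
  by_contra h
  push_neg at h
  have h2 : (volume.restrict (Set.Icc (0:ℝ) T)) (Set.Ioo a b) = 0 :=
    measure_mono_null (fun t ht => h t ht) hP
  rw [Measure.restrict_apply measurableSet_Ioo,
    Set.inter_eq_left.mpr ((Set.Ioo_subset_Icc_self).trans hsub), Real.volume_Ioo] at h2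
  simp only [ENNReal.ofReal_eq_zero] at h2
  linarith

lemma deriv_comp_zero (φ : ℝ → Fin 3 → ℝ) (v : Fin 3 → ℝ) (j : Fin 3) (t a b : ℝ)
    (ht : t ∈ Set.Ioo a b)
    (hd : HasDerivAt φ v t) (hz : ∀ s ∈ Set.Icc a b, φ s j = 0) : v j = 0 := by
  have hj : HasDerivAt (fun s => φ s j) (v j) t := (hasDerivAt_pi.mp hd) j
  have heq : (fun s => φ s j) =ᶠ[nhds t] fun _ => (0:ℝ) := by
    filter_upwards [Ioo_mem_nhds ht.1 ht.2] with s hs using hz s (Set.Ioo_subset_Icc_self hs)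
  exact ((hj.congr_of_eventuallyEq heq.symm).unique (hasDerivAt_const t 0))

theorem no_connection_to_partially_singular
    (α β θ T : ℝ) (hα : 0 < α) (hα' : α < π/4) (hβ : 0 < β) (hβ' : β ≤ π/4)
    (lam₀ : ℝ)
    (hlam₀ : lam₀ = -Real.sin α * (Real.sin β * |Real.sin θ| + Real.cos β * |Real.cos θ|))
    (u₁ u₂ : ℝ → ℝ) (hu₁m : Measurable u₁) (hu₂m : Measurable u₂)
    (hu₁ : ∀ t ∈ Set.Icc (0:ℝ) T, u₁ t ∈ Set.Icc (-1:ℝ) 1)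
    (hu₂ : ∀ t ∈ Set.Icc (0:ℝ) T, u₂ t ∈ Set.Icc (-1:ℝ) 1)
    (φ : ℝ → Fin 3 → ℝ) (K : NNReal)
    (hφ : LipschitzOnWith K φ (Set.Icc 0 T))
    (hφd : ∀ᵐ t ∂(volume.restrict (Set.Icc (0:ℝ) T)),
      HasDerivAt φ ((Pm α β (u₁ t) (u₂ t)).mulVec (φ t)) t)
    (hmax1 : ∀ᵐ t ∂(volume.restrict (Set.Icc (0:ℝ) T)), u₁ t * φ t 1 = |φ t 1|)
    (hmax2 : ∀ᵐ t ∂(volume.restrict (Set.Icc (0:ℝ) T)), u₂ t * φ t 2 = |φ t 2|)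
    (hquad : ∀ t ∈ Set.Icc (0:ℝ) T,
      (φ t 0)^2 + ((Real.cos α)^2/(Real.sin α)^2) *
        ((φ t 1)^2/(Real.sin β)^2 + (φ t 2)^2/(Real.cos β)^2) = (Real.cos α)^2)
    (hham : ∀ t ∈ Set.Icc (0:ℝ) T, φ t 0 + |φ t 1| + |φ t 2| + lam₀ = 0) :
    (¬ ∃ a b : ℝ, a < b ∧ Set.Icc a b ⊆ Set.Icc 0 T ∧ ∀ t ∈ Set.Icc a b, φ t 2 = 0) ∧
    (¬ ∃ a b : ℝ, a < b ∧ Set.Icc a b ⊆ Set.Icc 0 T ∧ ∀ t ∈ Set.Icc a b, φ t 1 = 0) := by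
  have hπ := Real.pi_pos
  have hsa : 0 < Real.sin α := Real.sin_pos_of_pos_of_lt_pi hα (by linarith)
  have hca : 0 < Real.cos α := Real.cos_pos_of_mem_Ioo ⟨by linarith, by linarith⟩
  have hsb : 0 < Real.sin β := Real.sin_pos_of_pos_of_lt_pi hβ (by linarith)
  have hcb : 0 < Real.cos β := Real.cos_pos_of_mem_Ioo ⟨by linarith, by linarith⟩
  have hcb1 : Real.cos β ≤ 1 := Real.cos_le_one β
  have hsaca : Real.sin α < Real.cos α := by
    have : Real.cos (π/2 - α) < Real.cos α := by
      apply Real.cos_lt_cos_of_nonneg_of_le_pi hα.le (by linarith) (by linarith)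
    rwa [Real.cos_pi_div_two_sub] at this
  have hlam2 : lam₀^2 ≤ (Real.sin α)^2 := by
    have hg : (Real.sin β * |Real.sin θ| + Real.cos β * |Real.cos θ|)^2 ≤ 1 := by
      nlinarith [sq_nonneg (Real.sin β * |Real.cos θ| - Real.cos β * |Real.sin θ|),
        Real.sin_sq_add_cos_sq θ, Real.sin_sq_add_cos_sq β,
        sq_abs (Real.sin θ), sq_abs (Real.cos θ)]
    rw [hlam₀]
    nlinarith [sq_nonneg (Real.sin α)]
  have htan : Real.tan β = Real.sin β / Real.cos β := Real.tan_eq_sin_div_cos β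
  have hae : ∀ᵐ t ∂(volume.restrict (Set.Icc (0:ℝ) T)),
      HasDerivAt φ ((Pm α β (u₁ t) (u₂ t)).mulVec (φ t)) t ∧
      u₁ t * φ t 1 = |φ t 1| ∧ u₂ t * φ t 2 = |φ t 2| := hφd.and (hmax1.and hmax2)
  constructor
  · rintro ⟨a, b, hab, hsub, hz⟩
    obtain ⟨t, htab, hd, hm1, hm2⟩ := exists_point hab hsub hae
    have htIcc : t ∈ Set.Icc a b := Set.Ioo_subset_Icc_self htab
    have htT : t ∈ Set.Icc (0:ℝ) T := hsub htIcc
    have h2z : φ t 2 = 0 := hz t htIcc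
    have hv2 : ((Pm α β (u₁ t) (u₂ t)).mulVec (φ t)) 2 = 0 :=
      deriv_comp_zero φ _ 2 t a b htab hd hz
    have hexp : ((Real.sin α)^2 * Real.sin β * Real.cos β / Real.cos α) * u₁ t * φ t 0
        - (Real.cos α / Real.tan β) * φ t 1 = 0 := by
      rw [← hv2]
      simp [Pm, Matrix.mulVec, dotProduct, Fin.sum_univ_three, Matrix.vecHead, Matrix.vecTail]
      ring
    have hq := hquad t htT
    rw [h2z] at hq
    have hh := hham t htT
    rw [h2z] at hh
    have hham' : φ t 0 + |φ t 1| + lam₀ = 0 := by simpa using hh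
    have hquad' : (Real.sin α)^2*(Real.sin β)^2*(φ t 0)^2
        + (Real.cos α)^2*|φ t 1|^2 = (Real.cos α)^2*((Real.sin α)^2*(Real.sin β)^2) := by
      rw [sq_abs]
      field_simp at hq
      apply mul_left_cancel₀ (pow_ne_zero 2 hcb.ne')
      linear_combination hq
    refine alg_contra (Real.sin α) (Real.cos α) (Real.sin β) lam₀ (φ t 0) (|φ t 1|)
      hsa hsaca hsb hlam2 hquad' hham' ?_
    rcases eq_or_ne (φ t 1) 0 with h1 | h1
    · left; simp [h1]
    · right
      have hx : |φ t 1| ≠ 0 := abs_ne_zero.mpr h1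
      rw [htan] at hexp
      have step1 : |φ t 1| * ((Real.sin α)^2 * Real.sin β * Real.cos β / Real.cos α * φ t 0)
          = |φ t 1| * (Real.cos α * Real.cos β / Real.sin β * |φ t 1|) := by
        have hxp : |φ t 1|^2 = (φ t 1)^2 := sq_abs _
        have hdd : Real.cos α / (Real.sin β / Real.cos β) = Real.cos α * Real.cos β / Real.sin β := by
          field_simp
        rw [hdd] at hexp
        linear_combination (φ t 1) * hexp
          - ((Real.sin α)^2 * Real.sin β * Real.cos β / Real.cos α * φ t 0) * hm1
          - (Real.cos α * Real.cos β / Real.sin β) * hxp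
      have step2 := mul_left_cancel₀ hx step1
      field_simp at step2
      have step3 : Real.cos β * ((Real.sin α)^2*(Real.sin β)^2*(φ t 0))
          = Real.cos β * ((Real.cos α)^2*|φ t 1|) := by linear_combination Real.cos β * step2
      exact mul_left_cancel₀ hcb.ne' step3
  · rintro ⟨a, b, hab, hsub, hz⟩
    obtain ⟨t, htab, hd, hm1, hm2⟩ := exists_point hab hsub hae
    have htIcc : t ∈ Set.Icc a b := Set.Ioo_subset_Icc_self htab
    have htT : t ∈ Set.Icc (0:ℝ) T := hsub htIcc
    have h1z : φ t 1 = 0 := hz t htIcc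
    have hv1 : ((Pm α β (u₁ t) (u₂ t)).mulVec (φ t)) 1 = 0 :=
      deriv_comp_zero φ _ 1 t a b htab hd hz
    have hexp : -((Real.sin α)^2 * Real.sin β * Real.cos β / Real.cos α) * u₂ t * φ t 0
        + (Real.cos α * Real.tan β) * φ t 2 = 0 := by
      rw [← hv1]
      simp [Pm, Matrix.mulVec, dotProduct, Fin.sum_univ_three, Matrix.vecHead, Matrix.vecTail]
    have hq := hquad t htT
    rw [h1z] at hq
    have hh := hham t htT
    rw [h1z] at hh
    have hham' : φ t 0 + |φ t 2| + lam₀ = 0 := by simpa using hh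
    have hquad' : (Real.sin α)^2*(Real.cos β)^2*(φ t 0)^2
        + (Real.cos α)^2*|φ t 2|^2 = (Real.cos α)^2*((Real.sin α)^2*(Real.cos β)^2) := by
      rw [sq_abs]
      field_simp at hq
      apply mul_left_cancel₀ (pow_ne_zero 2 hsb.ne')
      linear_combination hq
    refine alg_contra (Real.sin α) (Real.cos α) (Real.cos β) lam₀ (φ t 0) (|φ t 2|)
      hsa hsaca hcb hlam2 hquad' hham' ?_
    rcases eq_or_ne (φ t 2) 0 with h2 | h2
    · left; simp [h2]
    · right
      have hx : |φ t 2| ≠ 0 := abs_ne_zero.mpr h2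
      rw [htan] at hexp
      have step1 : |φ t 2| * ((Real.sin α)^2 * Real.sin β * Real.cos β / Real.cos α * φ t 0)
          = |φ t 2| * (Real.cos α * (Real.sin β / Real.cos β) * |φ t 2|) := by
        have hxp : |φ t 2|^2 = (φ t 2)^2 := sq_abs _
        linear_combination -(φ t 2) * hexp
          - ((Real.sin α)^2 * Real.sin β * Real.cos β / Real.cos α * φ t 0) * hm2
          - (Real.cos α * (Real.sin β / Real.cos β)) * hxp
      have step2 := mul_left_cancel₀ hx step1
      field_simp at step2
      have step3 : Real.sin β * ((Real.sin α)^2*(Real.cos β)^2*(φ t 0))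
          = Real.sin β * ((Real.cos α)^2*|φ t 2|) := by linear_combination Real.sin β * step2
      exact mul_left_cancel₀ hsb.ne' step3
end
end

section
/- Let 0 < α < π/4, 0 < β ≤ π/4, and let λ₀ ∈ ℝ with λ₀² < cos²α. Let u₁, u₂ : [0,T] → [−1,1] be measurable and let φ = (φ₀, φ₁, φ₂) : [0,T] → ℝ³ be Lipschitz with φ′(t) = P(u₁(t),u₂(t))·φ(t) a.e., uᵢ(t)·φᵢ(t) = |φᵢ(t)| a.e. for i = 1,2, and such that for all t: φ₀(t)²/cos²α + φ₁(t)²/(sin²α·sin²β) + φ₂(t)²/(sin²α·cos²β) = 1 and φ₀(t) + |φ₁(t)| + |φ₂(t)| + λ₀ = 0. Then there do not exist times s < s′ in [0,T] and an index i ∈ {1,2} such that φᵢ(s) = 0, φᵢ(s′) = 0, and φ₁(t) ≠ 0 and φ₂(t) ≠ 0 for all t ∈ (s, s′). In other words, two consecutive switching times cannot both be zeros of the same switching function: zeros of φ₁ and φ₂ alternate. -/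
open MeasureTheory Matrix Real

noncomputable section

open Set Filter

set_option maxHeartbeats 1000000

lemma ftc_ae {a b : ℝ} (hab : a < b) (K : NNReal) (f w : ℝ → ℝ)
    (hf : LipschitzOnWith K f (Set.Icc a b))
    (hw : ContinuousOn w (Set.Icc a b))
    (hd : ∀ᵐ t ∂(volume.restrict (Set.Ioo a b)), HasDerivAt f (w t) t) :
    f b - f a = ∫ t in Set.Ioo a b, w t := by
  classical
  set cl : ℝ → ℝ := fun x => max a (min x b) with hcl_def
  have hclmem : ∀ x, cl x ∈ Icc a b := by
    intro x
    constructor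
    · exact le_max_left _ _
    · simp only [cl, max_le_iff]
      exact ⟨hab.le, min_le_right _ _⟩
  have hcl_lip : LipschitzWith 1 cl := by
    apply LipschitzWith.of_dist_le_mul
    intro x y
    simp only [Real.dist_eq, cl, NNReal.coe_one, one_mul]
    calc |max a (min x b) - max a (min y b)|
        = |max (min x b) a - max (min y b) a| := by rw [max_comm a, max_comm a]
      _ ≤ |min x b - min y b| := abs_max_sub_max_le_abs _ _ _
      _ ≤ max |x - y| |b - b| := abs_min_sub_min_le_max _ _ _ _
      _ = |x - y| := by simp
  set F : ℝ → ℝ := fun x => f (cl x) with hF_def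
  have hF_lip : LipschitzWith K F := by
    apply LipschitzWith.of_dist_le_mul
    intro x y
    calc dist (F x) (F y) ≤ K * dist (cl x) (cl y) :=
          hf.dist_le_mul _ (hclmem x) _ (hclmem y)
      _ ≤ K * dist x y := by
          have := hcl_lip.dist_le_mul x y
          simp only [NNReal.coe_one, one_mul] at this
          exact mul_le_mul_of_nonneg_left this K.coe_nonneg
  have hFf : ∀ x ∈ Icc a b, F x = f x := by
    intro x hx
    simp only [F, cl, min_eq_left hx.2, max_eq_right hx.1]
  have hFcont : Continuous F := hF_lip.continuous
  set c : ℕ → ℝ := fun n => 1 / (n + 1) with hc_def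
  have hc_pos : ∀ n : ℕ, 0 < c n := by
    intro n
    positivity
  have hc_lim : Tendsto c atTop (nhds 0) := tendsto_one_div_add_atTop_nhds_zero_nat
  set g : ℕ → ℝ → ℝ := fun n x => (F (x + c n) - F x) / c n with hg_def
  -- a.e. convergence of difference quotients
  have h_lim : ∀ᵐ x ∂(volume.restrict (Set.Ioo a b)),
      Tendsto (fun n => g n x) atTop (nhds (w x)) := by
    filter_upwards [hd, ae_restrict_mem measurableSet_Ioo] with x hx hmem
    have hxF : HasDerivAt F (w x) x := by
      apply hx.congr_of_eventuallyEq
      exact Filter.eventuallyEq_of_mem (Ioo_mem_nhds hmem.1 hmem.2)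
        (fun y hy => hFf y (Ioo_subset_Icc_self hy))
    have hslope := hasDerivAt_iff_tendsto_slope.mp hxF
    have hseq : Tendsto (fun n => x + c n) atTop (nhdsWithin x {x}ᶜ) := by
      rw [tendsto_nhdsWithin_iff]
      constructor
      · have : Tendsto (fun n => x + c n) atTop (nhds (x + 0)) :=
          tendsto_const_nhds.add hc_lim
        simpa using this
      · exact Filter.Eventually.of_forall (fun n => by
          simp only [Set.mem_compl_iff, Set.mem_singleton_iff]
          have := hc_pos n; intro hcon; nlinarith [hc_pos n])
    have := hslope.comp hseq
    convert this using 2 with n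
    simp only [Function.comp_apply, slope_def_field]
    rw [div_eq_div_iff (hc_pos n).ne' (by have := hc_pos n; nlinarith : x + c n - x ≠ 0)]
    ring
  -- measurability and bound
  have hgmeas : ∀ n, AEStronglyMeasurable (g n) (volume.restrict (Set.Ioo a b)) := by
    intro n
    exact ((hFcont.comp (continuous_id.add continuous_const)).sub hFcont).div_const
      (c n) |>.aestronglyMeasurable
  have hbound : ∀ n, ∀ᵐ x ∂(volume.restrict (Set.Ioo a b)), ‖g n x‖ ≤ (K : ℝ) := by
    intro n
    apply Filter.Eventually.of_forall
    intro x
    have h1 : dist (F (x + c n)) (F x) ≤ K * dist (x + c n) x := hF_lip.dist_le_mul _ _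
    rw [Real.dist_eq, Real.dist_eq] at h1
    have h2 : |x + c n - x| = c n := by
      rw [add_sub_cancel_left, abs_of_pos (hc_pos n)]
    rw [h2] at h1
    simp only [g, norm_div, Real.norm_eq_abs, abs_of_pos (hc_pos n)]
    rw [div_le_iff₀ (hc_pos n)]
    exact h1
  have hwmeas : AEStronglyMeasurable w (volume.restrict (Set.Ioo a b)) :=
    (hw.mono Ioo_subset_Icc_self).aestronglyMeasurable measurableSet_Ioo
  have hDCT := MeasureTheory.tendsto_integral_of_dominated_convergence
    (fun _ => (K : ℝ)) hgmeas (integrable_const _) hbound h_lim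
  -- compute the integrals of g n
  have hIoo : ∀ h : ℝ → ℝ, (∫ x in Set.Ioo a b, h x) = ∫ x in a..b, h x := by
    intro h
    rw [intervalIntegral.integral_of_le hab.le, MeasureTheory.integral_Ioc_eq_integral_Ioo]
  have hFint : ∀ u v : ℝ, IntervalIntegrable F volume u v := fun u v =>
    hFcont.intervalIntegrable u v
  have hDn : ∀ n, (∫ x in a..b, g n x)
      = ((∫ x in b..(b + c n), F x) - ∫ x in a..(a + c n), F x) / c n := by
    intro n
    have e0 : (∫ x in a..b, g n x)
        = ((∫ x in a..b, F (x + c n)) - ∫ x in a..b, F x) / c n := by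
      simp only [g]
      rw [intervalIntegral.integral_div]
      congr 1
      exact intervalIntegral.integral_sub
        ((hFcont.comp (continuous_id.add continuous_const)).intervalIntegrable a b)
        (hFint a b)
    rw [e0, intervalIntegral.integral_comp_add_right F (c n)]
    congr 1
    have e1 := intervalIntegral.integral_add_adjacent_intervals (hFint a b) (hFint b (b + c n))
    have e2 := intervalIntegral.integral_add_adjacent_intervals (hFint a (a + c n))
      (hFint (a + c n) (b + c n))
    linarith
  -- limit of the right-hand side
  have hflim : Tendsto (fun n => ∫ x in a..b, g n x) atTop (nhds (f b - f a)) := by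
    have hFb : F b = f b := hFf b ⟨hab.le, le_refl b⟩
    have hFa : F a = f a := hFf a ⟨le_refl a, hab.le⟩
    have key : ∀ n, ‖(∫ x in a..b, g n x) - (f b - f a)‖ ≤ 2 * K * c n := by
      intro n
      have hcn := hc_pos n
      rw [hDn n]
      have hb1 : (∫ x in b..(b + c n), F x) = (∫ x in b..(b + c n), (F x - F b)) + c n * f b := by
        rw [intervalIntegral.integral_sub (hFint _ _) (intervalIntegrable_const)]
        simp [hFb]
      have ha1 : (∫ x in a..(a + c n), F x) = (∫ x in a..(a + c n), (F x - F a)) + c n * f a := by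
        rw [intervalIntegral.integral_sub (hFint _ _) (intervalIntegrable_const)]
        simp [hFa]
      have hEb : ‖∫ x in b..(b + c n), (F x - F b)‖ ≤ (K * c n) * |(b + c n) - b| := by
        apply intervalIntegral.norm_integral_le_of_norm_le_const
        intro x hx
        rw [Set.uIoc_of_le (by linarith)] at hx
        have := hF_lip.dist_le_mul x b
        rw [Real.dist_eq, Real.dist_eq] at this
        have hxb : |x - b| ≤ c n := by
          rw [abs_of_pos (by linarith [hx.1] : (0:ℝ) < x - b)]
          linarith [hx.2]
        calc ‖F x - F b‖ ≤ K * |x - b| := this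
          _ ≤ K * c n := by
              exact mul_le_mul_of_nonneg_left hxb K.coe_nonneg
      have hEa : ‖∫ x in a..(a + c n), (F x - F a)‖ ≤ (K * c n) * |(a + c n) - a| := by
        apply intervalIntegral.norm_integral_le_of_norm_le_const
        intro x hx
        rw [Set.uIoc_of_le (by linarith)] at hx
        have := hF_lip.dist_le_mul x a
        rw [Real.dist_eq, Real.dist_eq] at this
        have hxa : |x - a| ≤ c n := by
          rw [abs_of_pos (by linarith [hx.1] : (0:ℝ) < x - a)]
          linarith [hx.2]
        calc ‖F x - F a‖ ≤ K * |x - a| := this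
          _ ≤ K * c n := mul_le_mul_of_nonneg_left hxa K.coe_nonneg
      have habs : |(b + c n) - b| = c n := by rw [add_sub_cancel_left, abs_of_pos hcn]
      have habs' : |(a + c n) - a| = c n := by rw [add_sub_cancel_left, abs_of_pos hcn]
      rw [habs] at hEb
      rw [habs'] at hEa
      rw [hb1, ha1]
      set E1 := ∫ x in b..(b + c n), (F x - F b) with hE1
      set E2 := ∫ x in a..(a + c n), (F x - F a) with hE2
      have heq : (E1 + c n * f b - (E2 + c n * f a)) / c n - (f b - f a) = (E1 - E2) / c n := by
        field_simp
        ring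
      rw [heq, Real.norm_eq_abs, abs_div, abs_of_pos hcn, div_le_iff₀ hcn]
      have : |E1 - E2| ≤ |E1| + |E2| := abs_sub _ _
      rw [Real.norm_eq_abs] at hEb hEa
      nlinarith [hEb, hEa, K.coe_nonneg, sq_nonneg (c n)]
    have h2K : Tendsto (fun n => 2 * (K:ℝ) * c n) atTop (nhds 0) := by
      have := hc_lim.const_mul (2 * (K:ℝ))
      rw [mul_zero] at this
      exact this
    have := squeeze_zero_norm key h2K
    have := this.add (tendsto_const_nhds (x := f b - f a))
    simp only [sub_add_cancel, zero_add] at this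
    exact this
  rw [hIoo w]
  exact tendsto_nhds_unique hflim (by simpa only [hIoo] using hDCT)


lemma nonneg_left {v : ℝ → ℝ} {s s' : ℝ} (hss : s < s')
    (hv : ContinuousOn v (Set.Icc s s')) (hpos : ∀ t ∈ Set.Ioo s s', 0 ≤ v t) :
    0 ≤ v s := by
  have hne : (nhdsWithin s (Set.Ioo s s')).NeBot := by
    rw [← mem_closure_iff_nhdsWithin_neBot, closure_Ioo hss.ne]
    exact ⟨le_refl s, hss.le⟩
  have htend : Tendsto v (nhdsWithin s (Set.Ioo s s')) (nhds (v s)) :=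
    (hv s ⟨le_refl s, hss.le⟩).mono_left (nhdsWithin_mono s Set.Ioo_subset_Icc_self)
  exact ge_of_tendsto htend (eventually_nhdsWithin_of_forall hpos)


lemma nonneg_right {v : ℝ → ℝ} {s s' : ℝ} (hss : s < s')
    (hv : ContinuousOn v (Set.Icc s s')) (hpos : ∀ t ∈ Set.Ioo s s', 0 ≤ v t) :
    0 ≤ v s' := by
  have hne : (nhdsWithin s' (Set.Ioo s s')).NeBot := by
    rw [← mem_closure_iff_nhdsWithin_neBot, closure_Ioo hss.ne]
    exact ⟨hss.le, le_refl s'⟩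
  have htend : Tendsto v (nhdsWithin s' (Set.Ioo s s')) (nhds (v s')) :=
    (hv s' ⟨hss.le, le_refl s'⟩).mono_left (nhdsWithin_mono s' Set.Ioo_subset_Icc_self)
  exact ge_of_tendsto htend (eventually_nhdsWithin_of_forall hpos)


lemma same_sign {v : ℝ → ℝ} {s s' : ℝ} (hv : ContinuousOn v (Set.Icc s s'))
    (hne : ∀ t ∈ Set.Ioo s s', v t ≠ 0) {t m : ℝ}
    (ht : t ∈ Set.Ioo s s') (hm : m ∈ Set.Ioo s s') :
    0 < v t * v m := by
  rcases lt_trichotomy (v t * v m) 0 with hlt | heq | hgt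
  · exfalso
    have hsub : Set.uIcc t m ⊆ Set.Ioo s s' := by
      intro x hx
      rw [Set.mem_uIcc] at hx
      constructor
      · rcases hx with h | h
        · exact lt_of_lt_of_le ht.1 h.1
        · exact lt_of_lt_of_le hm.1 h.1
      · rcases hx with h | h
        · exact lt_of_le_of_lt h.2 hm.2
        · exact lt_of_le_of_lt h.2 ht.2
    have hcont : ContinuousOn v (Set.uIcc t m) :=
      hv.mono (hsub.trans Set.Ioo_subset_Icc_self)
    have h0 : (0:ℝ) ∈ Set.uIcc (v t) (v m) := by
      rw [Set.mem_uIcc]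
      rcases mul_neg_iff.mp hlt with ⟨h1, h2⟩ | ⟨h1, h2⟩
      · right; exact ⟨h2.le, h1.le⟩
      · left; exact ⟨h1.le, h2.le⟩
    obtain ⟨x, hx, hvx⟩ := intermediate_value_uIcc hcont h0
    exact hne x (hsub hx) hvx
  · exact absurd heq (mul_ne_zero (hne t ht) (hne m hm))
  · exact hgt


lemma sign_choice {v : ℝ → ℝ} {s s' m : ℝ} (hv : ContinuousOn v (Set.Icc s s'))
    (hne : ∀ t ∈ Set.Ioo s s', v t ≠ 0) (hm : m ∈ Set.Ioo s s') :
    ∃ ε : ℝ, (ε = 1 ∨ ε = -1) ∧ ∀ t ∈ Set.Ioo s s', 0 < ε * v t := by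
  by_cases hp : 0 < v m
  · refine ⟨1, Or.inl rfl, fun t ht => ?_⟩
    have := same_sign hv hne ht hm
    nlinarith
  · refine ⟨-1, Or.inr rfl, fun t ht => ?_⟩
    have hneg : v m < 0 := (not_lt.mp hp).lt_of_ne (hne m hm)
    have := same_sign hv hne ht hm
    nlinarith


lemma deriv_sign_left {s s' : ℝ} (hss : s < s') (K : NNReal) {h ψ : ℝ → ℝ}
    (hK : LipschitzOnWith K h (Set.Icc s s'))
    (hψ : ContinuousOn ψ (Set.Icc s s'))
    (hae : ∀ᵐ t ∂(volume.restrict (Set.Ioo s s')), HasDerivAt h (ψ t) t)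
    (hpos : ∀ t ∈ Set.Icc s s', 0 ≤ h t) (h0 : h s = 0) :
    0 ≤ ψ s := by
  by_contra hcon
  push_neg at hcon
  -- get δ from continuity
  have hcw : ContinuousWithinAt ψ (Set.Icc s s') s := hψ s ⟨le_refl s, hss.le⟩
  rw [Metric.continuousWithinAt_iff] at hcw
  obtain ⟨δ, hδ, hball⟩ := hcw (-(ψ s) / 2) (by linarith)
  set t := min (s + δ/2) s' with ht_def
  have hst : s < t := lt_min (by linarith) hss
  have hts' : t ≤ s' := min_le_right _ _
  have hIccsub : Set.Icc s t ⊆ Set.Icc s s' := Set.Icc_subset_Icc le_rfl hts'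
  have hbound : ∀ x ∈ Set.Ioo s t, ψ x ≤ ψ s / 2 := by
    intro x hx
    have hx1 : x ∈ Set.Icc s s' := ⟨hx.1.le, hx.2.le.trans hts'⟩
    have hxd : dist x s < δ := by
      rw [Real.dist_eq, abs_of_pos (by linarith [hx.1] : (0:ℝ) < x - s)]
      have := hx.2
      have := min_le_left (s + δ/2) s'
      linarith [hx.2.trans_le (min_le_left (s + δ/2) s')]
    have := hball hx1 hxd
    rw [Real.dist_eq, abs_lt] at this
    linarith [this.2]
  have hftc := ftc_ae hst K h ψ (hK.mono hIccsub) (hψ.mono hIccsub)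
    (ae_restrict_of_ae_restrict_of_subset (Set.Ioo_subset_Ioo le_rfl hts') hae)
  have hint : (∫ x in Set.Ioo s t, ψ x) ≤ ∫ x in Set.Ioo s t, (ψ s / 2) := by
    apply MeasureTheory.setIntegral_mono_on
    · exact (hψ.mono hIccsub).integrableOn_Icc.mono_set Set.Ioo_subset_Icc_self
    · exact integrableOn_const measure_Ioo_lt_top.ne
    · exact measurableSet_Ioo
    · exact hbound
  have hconst : (∫ x in Set.Ioo s t, (ψ s / 2)) = (t - s) * (ψ s / 2) := by
    rw [MeasureTheory.setIntegral_const, Real.volume_real_Ioo_of_le hst.le, smul_eq_mul]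
  have hnonneg := hpos t ⟨hst.le, hts'⟩
  rw [h0, sub_zero] at hftc
  nlinarith [hftc, hint, hconst, hst]


lemma deriv_sign_right {s s' : ℝ} (hss : s < s') (K : NNReal) {h ψ : ℝ → ℝ}
    (hK : LipschitzOnWith K h (Set.Icc s s'))
    (hψ : ContinuousOn ψ (Set.Icc s s'))
    (hae : ∀ᵐ t ∂(volume.restrict (Set.Ioo s s')), HasDerivAt h (ψ t) t)
    (hpos : ∀ t ∈ Set.Icc s s', 0 ≤ h t) (h1 : h s' = 0) :
    ψ s' ≤ 0 := by
  by_contra hcon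
  push_neg at hcon
  have hcw : ContinuousWithinAt ψ (Set.Icc s s') s' := hψ s' ⟨hss.le, le_refl s'⟩
  rw [Metric.continuousWithinAt_iff] at hcw
  obtain ⟨δ, hδ, hball⟩ := hcw (ψ s' / 2) (by linarith)
  set t := max (s' - δ/2) s with ht_def
  have hst : t < s' := max_lt (by linarith) hss
  have hts : s ≤ t := le_max_right _ _
  have hIccsub : Set.Icc t s' ⊆ Set.Icc s s' := Set.Icc_subset_Icc hts le_rfl
  have hbound : ∀ x ∈ Set.Ioo t s', ψ s' / 2 ≤ ψ x := by
    intro x hx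
    have hx1 : x ∈ Set.Icc s s' := ⟨hts.trans hx.1.le, hx.2.le⟩
    have hxd : dist x s' < δ := by
      rw [Real.dist_eq, abs_of_neg (by linarith [hx.2] : x - s' < 0)]
      have := le_max_left (s' - δ/2) s
      linarith [this.trans_lt hx.1]
    have := hball hx1 hxd
    rw [Real.dist_eq, abs_lt] at this
    linarith [this.1]
  have hftc := ftc_ae hst K h ψ (hK.mono hIccsub) (hψ.mono hIccsub)
    (ae_restrict_of_ae_restrict_of_subset (Set.Ioo_subset_Ioo hts le_rfl) hae)
  have hint : (∫ x in Set.Ioo t s', (ψ s' / 2)) ≤ ∫ x in Set.Ioo t s', ψ x := by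
    apply MeasureTheory.setIntegral_mono_on
    · exact integrableOn_const measure_Ioo_lt_top.ne
    · exact (hψ.mono hIccsub).integrableOn_Icc.mono_set Set.Ioo_subset_Icc_self
    · exact measurableSet_Ioo
    · exact hbound
  have hconst : (∫ x in Set.Ioo t s', (ψ s' / 2)) = (s' - t) * (ψ s' / 2) := by
    rw [MeasureTheory.setIntegral_const, Real.volume_real_Ioo_of_le hst.le, smul_eq_mul]
  have hnonneg := hpos t ⟨hts, hst.le⟩
  rw [h1] at hftc
  nlinarith [hftc, hint, hconst, hst]


lemma core_algebra {a b c lam g₀ g₁ f₀ f₁ σ : ℝ} (ha : 0 < a) (hb : 0 < b) (hc : 0 < c)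
    (hlam : lam^2 < a*b) (hg₀ : 0 < g₀) (hg₁ : 0 < g₁)
    (ham₀ : f₀ + g₀ = -lam) (ham₁ : f₁ + g₁ = -lam)
    (q₀ : f₀^2*(c*a) + g₀^2*(a*b) = (a*b)*(c*a))
    (q₁ : f₁^2*(c*a) + g₁^2*(a*b) = (a*b)*(c*a))
    (hσ : σ = 1 ∨ σ = -1)
    (hp : 0 ≤ σ*(b*g₀ - c*f₀)) (hq : σ*(b*g₁ - c*f₁) ≤ 0) : False := by
  have hf₀ : f₀ = -lam - g₀ := by linarith
  have hf₁ : f₁ = -lam - g₁ := by linarith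
  subst hf₀ hf₁
  -- step 1 : g₀ = g₁
  have key : (g₀ - g₁) * ((a*b + c*a)*(g₀*g₁) - c*a*(lam^2 - a*b)) = 0 := by
    linear_combination g₁ * q₀ - g₀ * q₁
  have hfac : (a*b + c*a)*(g₀*g₁) - c*a*(lam^2 - a*b) > 0 := by
    nlinarith [mul_pos ha hb, mul_pos hc ha, mul_pos hg₀ hg₁]
  have hgg : g₀ = g₁ := by
    rcases mul_eq_zero.mp key with h | h
    · linarith
    · linarith
  subst hgg
  -- step 2 : b*g₀ = c*f₀
  have hbc : b*g₀ - c*(-lam - g₀) = 0 := by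
    rcases hσ with h | h <;> subst h <;> linarith
  -- step 3 : contradiction
  have hA2 : (-lam - g₀)^2 * c^2 = b^2 * g₀^2 := by
    linear_combination (-(c*(-lam - g₀) + b*g₀)) * hbc
  have e1 : g₀^2*(b+c)*(a*b) = (a*c^2)*(a*b) := by
    linear_combination c * q₀ - a * hA2
  have e1' : g₀^2*(b+c) = a*c^2 :=
    mul_right_cancel₀ (ne_of_gt (mul_pos ha hb)) e1
  have hcl : c*lam = -(b+c)*g₀ := by linear_combination hbc
  have e2 : lam^2*c^2 = (b+c)^2*g₀^2 := by
    linear_combination (c*lam - (b+c)*g₀) * hcl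
  have e3 : lam^2*c^2 = (a*(b+c))*c^2 := by
    rw [e2]; linear_combination (b+c) * e1'
  have e4 : lam^2 = a*(b+c) := mul_right_cancel₀ (by positivity) e3
  nlinarith [mul_pos ha hc]


lemma key_lemma {a b c lam σ s s' : ℝ} (hss : s < s')
    (ha : 0 < a) (hb : 0 < b) (hc : 0 < c) (hσ : σ = 1 ∨ σ = -1) (hlam : lam^2 < a*b)
    (K : NNReal) {h g f : ℝ → ℝ}
    (hhL : LipschitzOnWith K h (Set.Icc s s'))
    (hgc : ContinuousOn g (Set.Icc s s')) (hfc : ContinuousOn f (Set.Icc s s'))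
    (hae : ∀ᵐ t ∂(volume.restrict (Set.Ioo s s')),
      HasDerivAt h (σ*(b * g t - c * f t)) t)
    (hh0 : h s = 0) (hh1 : h s' = 0)
    (hhpos : ∀ t ∈ Set.Ioo s s', 0 < h t)
    (q₀ : f s^2*(c*a) + g s^2*(a*b) = (a*b)*(c*a))
    (q₁ : f s'^2*(c*a) + g s'^2*(a*b) = (a*b)*(c*a))
    (ham₀ : f s + g s = -lam) (ham₁ : f s' + g s' = -lam)
    (hgs : 0 < g s) (hgs' : 0 < g s') : False := by
  have hψc : ContinuousOn (fun t => σ*(b * g t - c * f t)) (Set.Icc s s') :=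
    continuousOn_const.mul ((continuousOn_const.mul hgc).sub (continuousOn_const.mul hfc))
  have hpos : ∀ t ∈ Set.Icc s s', 0 ≤ h t := by
    intro t ht
    rcases ht.1.eq_or_lt with heq | h1
    · rw [← heq, hh0]
    · rcases ht.2.eq_or_lt with heq | h2
      · rw [heq, hh1]
      · exact (hhpos t ⟨h1, h2⟩).le
  have hL := deriv_sign_left hss K hhL hψc hae hpos hh0
  have hR := deriv_sign_right hss K hhL hψc hae hpos hh1
  exact core_algebra ha hb hc hlam hgs hgs' ham₀ ham₁ q₀ q₁ hσ hL hR


lemma quad_convert {X Z A C : ℝ} (hA : 0 < A) (hC : 0 < C)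
    (h : X^2/A + Z^2/C = 1) : X^2*C + Z^2*A = A*C := by
  have hA' : A ≠ 0 := hA.ne'
  have hC' : C ≠ 0 := hC.ne'
  field_simp at h
  linarith


lemma Pm_mulVec1 (α β u₁ u₂ : ℝ) (v : Fin 3 → ℝ) :
    (Pm α β u₁ u₂).mulVec v 1
    = -((Real.sin α)^2 * Real.sin β * Real.cos β / Real.cos α) * u₂ * v 0
      + (Real.cos α * Real.tan β) * v 2 := by
  simp [Pm, Matrix.mulVec, dotProduct, Fin.sum_univ_three, Matrix.vecHead, Matrix.vecTail]

lemma Pm_mulVec2 (α β u₁ u₂ : ℝ) (v : Fin 3 → ℝ) :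
    (Pm α β u₁ u₂).mulVec v 2
    = ((Real.sin α)^2 * Real.sin β * Real.cos β / Real.cos α) * u₁ * v 0
      - (Real.cos α / Real.tan β) * v 1 := by
  simp [Pm, Matrix.mulVec, dotProduct, Fin.sum_univ_three, Matrix.vecHead, Matrix.vecTail]
  try ring


theorem switchings_alternate
    (α β T : ℝ) (hα : 0 < α) (hα' : α < π/4) (hβ : 0 < β) (hβ' : β ≤ π/4)
    (lam₀ : ℝ) (hlam₀ : lam₀^2 < (Real.cos α)^2)
    (u₁ u₂ : ℝ → ℝ) (hu₁m : Measurable u₁) (hu₂m : Measurable u₂)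
    (hu₁ : ∀ t ∈ Set.Icc (0:ℝ) T, u₁ t ∈ Set.Icc (-1:ℝ) 1)
    (hu₂ : ∀ t ∈ Set.Icc (0:ℝ) T, u₂ t ∈ Set.Icc (-1:ℝ) 1)
    (φ : ℝ → Fin 3 → ℝ) (K : NNReal)
    (hφ : LipschitzOnWith K φ (Set.Icc 0 T))
    (hφd : ∀ᵐ t ∂(volume.restrict (Set.Icc (0:ℝ) T)),
      HasDerivAt φ ((Pm α β (u₁ t) (u₂ t)).mulVec (φ t)) t)
    (hmax1 : ∀ᵐ t ∂(volume.restrict (Set.Icc (0:ℝ) T)), u₁ t * φ t 1 = |φ t 1|)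
    (hmax2 : ∀ᵐ t ∂(volume.restrict (Set.Icc (0:ℝ) T)), u₂ t * φ t 2 = |φ t 2|)
    (hquad : ∀ t ∈ Set.Icc (0:ℝ) T,
      (φ t 0)^2/(Real.cos α)^2 + (φ t 1)^2/((Real.sin α)^2 * (Real.sin β)^2)
        + (φ t 2)^2/((Real.sin α)^2 * (Real.cos β)^2) = 1)
    (hham : ∀ t ∈ Set.Icc (0:ℝ) T, φ t 0 + |φ t 1| + |φ t 2| + lam₀ = 0) :
    ¬ ∃ s s' : ℝ, s ∈ Set.Icc (0:ℝ) T ∧ s' ∈ Set.Icc (0:ℝ) T ∧ s < s' ∧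
      (∃ i : Fin 3, (i = 1 ∨ i = 2) ∧ φ s i = 0 ∧ φ s' i = 0) ∧
      (∀ t ∈ Set.Ioo s s', φ t 1 ≠ 0 ∧ φ t 2 ≠ 0) := by
  rintro ⟨s, s', hs, hs', hss, ⟨i, hi, his, his'⟩, hnz⟩
  have hπ : (0:ℝ) < π := Real.pi_pos
  have hcosα : 0 < Real.cos α := Real.cos_pos_of_mem_Ioo ⟨by linarith, by linarith⟩
  have hsinα : 0 < Real.sin α := Real.sin_pos_of_pos_of_lt_pi hα (by linarith)
  have hcosβ : 0 < Real.cos β := Real.cos_pos_of_mem_Ioo ⟨by linarith, by linarith⟩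
  have hsinβ : 0 < Real.sin β := Real.sin_pos_of_pos_of_lt_pi hβ (by linarith)
  have htanβ : 0 < Real.tan β := by
    rw [Real.tan_eq_sin_div_cos]; positivity
  set a : ℝ := Real.cos α / Real.tan β with ha_def
  set b : ℝ := Real.cos α * Real.tan β with hb_def
  set c : ℝ := Real.sin α^2 * Real.sin β * Real.cos β / Real.cos α with hc_def
  have ha : 0 < a := by rw [ha_def]; positivity
  have hb : 0 < b := by rw [hb_def]; positivity
  have hc : 0 < c := by rw [hc_def]; positivity
  have hab : a*b = Real.cos α^2 := by
    rw [ha_def, hb_def]; field_simp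
  have hbc : b*c = Real.sin α^2 * Real.sin β^2 := by
    rw [hb_def, hc_def, Real.tan_eq_sin_div_cos]; field_simp
  have hca : c*a = Real.sin α^2 * Real.cos β^2 := by
    rw [hc_def, ha_def, Real.tan_eq_sin_div_cos]; field_simp
  -- subsets and continuity
  have hsub : Set.Icc s s' ⊆ Set.Icc 0 T := fun t ht => ⟨hs.1.trans ht.1, ht.2.trans hs'.2⟩
  have hsubIoo : Set.Ioo s s' ⊆ Set.Icc 0 T := Set.Ioo_subset_Icc_self.trans hsub
  have hφc : ContinuousOn φ (Set.Icc s s') := (hφ.continuousOn).mono hsub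
  have hcomp : ∀ j : Fin 3, ContinuousOn (fun t => φ t j) (Set.Icc s s') :=
    fun j => (continuous_apply j).comp_continuousOn hφc
  have hcompL : ∀ (j : Fin 3) (ε : ℝ), LipschitzOnWith K (fun t => ε * φ t j) (Set.Icc 0 T)
      → True := fun _ _ _ => trivial
  -- Lipschitz for scaled components
  have hLip : ∀ (j : Fin 3) (ε : ℝ), |ε| = 1 →
      LipschitzOnWith K (fun t => ε * φ t j) (Set.Icc s s') := by
    intro j ε hε
    rw [lipschitzOnWith_iff_dist_le_mul]
    intro x hx y hy
    have h1 := lipschitzOnWith_iff_dist_le_mul.mp (hφ.mono hsub) x hx y hy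
    have h2 : dist (ε * φ x j) (ε * φ y j) = |ε| * dist (φ x j) (φ y j) := by
      rw [Real.dist_eq, Real.dist_eq, ← abs_mul]
      congr 1; ring
    rw [h2, hε, one_mul]
    exact (dist_le_pi_dist (φ x) (φ y) j).trans h1
  -- abs facts
  have habs : ∀ (ε x : ℝ), (ε = 1 ∨ ε = -1) → 0 < ε * x → |x| = ε * x := by
    rintro ε x (rfl | rfl) hx
    · rw [one_mul] at hx ⊢; exact abs_of_pos hx
    · rw [neg_one_mul] at hx ⊢
      rw [abs_of_neg (by linarith)]
  have hsq : ∀ (ε x : ℝ), (ε = 1 ∨ ε = -1) → (ε*x)^2 = x^2 := by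
    rintro ε x (rfl | rfl) <;> ring
  have habs1 : ∀ ε : ℝ, (ε = 1 ∨ ε = -1) → |ε| = 1 := by
    rintro ε (rfl | rfl) <;> norm_num
  have hne0 : ∀ ε : ℝ, (ε = 1 ∨ ε = -1) → ε ≠ 0 := by
    rintro ε (rfl | rfl) <;> norm_num
  -- not both components vanish
  have hnotboth : ∀ t ∈ Set.Icc (0:ℝ) T, φ t 1 = 0 → φ t 2 = 0 → False := by
    intro t ht h1 h2
    have hq := hquad t ht
    have hh := hham t ht
    rw [h1, h2] at hq hh
    norm_num at hq hh
    -- hq : φ t 0 ^ 2 / cos α ^ 2 = 1, hh : φ t 0 + lam₀ = 0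
    have hx : φ t 0 ^ 2 = Real.cos α ^ 2 := by
      field_simp at hq
      linarith
    have hphi : φ t 0 = -lam₀ := by linarith
    rw [hphi] at hx
    nlinarith [hx, hlam₀]
  -- signs
  set m : ℝ := (s + s') / 2 with hm_def
  have hm : m ∈ Set.Ioo s s' := ⟨by rw [hm_def]; linarith, by rw [hm_def]; linarith⟩
  obtain ⟨ε₁, hε₁, hsgn1⟩ := sign_choice (hcomp 1) (fun t ht => (hnz t ht).1) hm
  obtain ⟨ε₂, hε₂, hsgn2⟩ := sign_choice (hcomp 2) (fun t ht => (hnz t ht).2) hm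
  -- a.e. facts on Ioo s s'
  have hφd' := ae_restrict_of_ae_restrict_of_subset hsubIoo hφd
  have hmax1' := ae_restrict_of_ae_restrict_of_subset hsubIoo hmax1
  have hmax2' := ae_restrict_of_ae_restrict_of_subset hsubIoo hmax2
  -- control values on the interior
  have hu1val : ∀ᵐ t ∂(volume.restrict (Set.Ioo s s')), u₁ t = ε₁ := by
    filter_upwards [hmax1', ae_restrict_mem measurableSet_Ioo] with t htm htmem
    have hval : |φ t 1| = ε₁ * φ t 1 := habs ε₁ _ hε₁ (hsgn1 t htmem)
    have hne : φ t 1 ≠ 0 := (hnz t htmem).1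
    have : u₁ t * φ t 1 = ε₁ * φ t 1 := by rw [htm, hval]
    exact mul_right_cancel₀ hne this
  have hu2val : ∀ᵐ t ∂(volume.restrict (Set.Ioo s s')), u₂ t = ε₂ := by
    filter_upwards [hmax2', ae_restrict_mem measurableSet_Ioo] with t htm htmem
    have hval : |φ t 2| = ε₂ * φ t 2 := habs ε₂ _ hε₂ (hsgn2 t htmem)
    have hne : φ t 2 ≠ 0 := (hnz t htmem).2
    have : u₂ t * φ t 2 = ε₂ * φ t 2 := by rw [htm, hval]
    exact mul_right_cancel₀ hne this
  rcases hi with hi | hi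
  · -- case i = 1 : φ _ 1 vanishes at both endpoints
    rw [hi] at his his'
    have hgc : ContinuousOn (fun t => ε₂ * φ t 2) (Set.Icc s s') :=
      continuousOn_const.mul (hcomp 2)
    have hgs0 : 0 ≤ ε₂ * φ s 2 := nonneg_left (v := fun t => ε₂ * φ t 2) hss hgc (fun t ht => (hsgn2 t ht).le)
    have hgs'0 : 0 ≤ ε₂ * φ s' 2 := nonneg_right (v := fun t => ε₂ * φ t 2) hss hgc (fun t ht => (hsgn2 t ht).le)
    have hgs : 0 < ε₂ * φ s 2 := by
      rcases hgs0.eq_or_lt with heq | h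
      · exact absurd ((mul_eq_zero.mp heq.symm).resolve_left (hne0 ε₂ hε₂))
          (fun h2 => hnotboth s hs his h2)
      · exact h
    have hgs' : 0 < ε₂ * φ s' 2 := by
      rcases hgs'0.eq_or_lt with heq | h
      · exact absurd ((mul_eq_zero.mp heq.symm).resolve_left (hne0 ε₂ hε₂))
          (fun h2 => hnotboth s' hs' his' h2)
      · exact h
    have hham0 := hham s hs
    have hham1 := hham s' hs'
    rw [his, abs_zero, habs ε₂ _ hε₂ hgs] at hham0
    rw [his', abs_zero, habs ε₂ _ hε₂ hgs'] at hham1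
    have ham₀ : φ s 0 + ε₂ * φ s 2 = -lam₀ := by linarith
    have ham₁ : φ s' 0 + ε₂ * φ s' 2 = -lam₀ := by linarith
    have hq0 := hquad s hs
    have hq1 := hquad s' hs'
    rw [his] at hq0
    rw [his'] at hq1
    norm_num at hq0 hq1
    have q₀ : (φ s 0)^2*(c*a) + (ε₂*φ s 2)^2*(a*b) = (a*b)*(c*a) := by
      rw [hsq ε₂ _ hε₂, hab, hca]
      exact quad_convert (by positivity) (by positivity) hq0
    have q₁ : (φ s' 0)^2*(c*a) + (ε₂*φ s' 2)^2*(a*b) = (a*b)*(c*a) := by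
      rw [hsq ε₂ _ hε₂, hab, hca]
      exact quad_convert (by positivity) (by positivity) hq1
    have hσ : ε₁*ε₂ = 1 ∨ ε₁*ε₂ = -1 := by
      rcases hε₁ with rfl | rfl <;> rcases hε₂ with rfl | rfl <;> norm_num
    have hae : ∀ᵐ t ∂(volume.restrict (Set.Ioo s s')),
        HasDerivAt (fun t => ε₁ * φ t 1)
          ((ε₁*ε₂)*(b * (ε₂ * φ t 2) - c * (φ t 0))) t := by
      filter_upwards [hφd', hu2val] with t htd hu2
      have hD := ((hasDerivAt_pi.mp htd) 1).const_mul ε₁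
      refine hD.congr_deriv ?_
      rw [Pm_mulVec1, hu2, hb_def, hc_def]
      rcases hε₂ with rfl | rfl <;> ring
    exact key_lemma hss ha hb hc hσ (by rw [hab]; exact hlam₀) K
      (hLip 1 ε₁ (habs1 ε₁ hε₁)) hgc (hcomp 0) hae
      (by simp [his]) (by simp [his']) hsgn1 q₀ q₁ ham₀ ham₁ hgs hgs'
  · -- case i = 2 : φ _ 2 vanishes at both endpoints
    rw [hi] at his his'
    have hgc : ContinuousOn (fun t => ε₁ * φ t 1) (Set.Icc s s') :=
      continuousOn_const.mul (hcomp 1)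
    have hgs0 : 0 ≤ ε₁ * φ s 1 := nonneg_left (v := fun t => ε₁ * φ t 1) hss hgc (fun t ht => (hsgn1 t ht).le)
    have hgs'0 : 0 ≤ ε₁ * φ s' 1 := nonneg_right (v := fun t => ε₁ * φ t 1) hss hgc (fun t ht => (hsgn1 t ht).le)
    have hgs : 0 < ε₁ * φ s 1 := by
      rcases hgs0.eq_or_lt with heq | h
      · exact absurd ((mul_eq_zero.mp heq.symm).resolve_left (hne0 ε₁ hε₁))
          (fun h1 => hnotboth s hs h1 his)
      · exact h
    have hgs' : 0 < ε₁ * φ s' 1 := by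
      rcases hgs'0.eq_or_lt with heq | h
      · exact absurd ((mul_eq_zero.mp heq.symm).resolve_left (hne0 ε₁ hε₁))
          (fun h1 => hnotboth s' hs' h1 his')
      · exact h
    have hham0 := hham s hs
    have hham1 := hham s' hs'
    rw [his, abs_zero, habs ε₁ _ hε₁ hgs] at hham0
    rw [his', abs_zero, habs ε₁ _ hε₁ hgs'] at hham1
    have ham₀ : φ s 0 + ε₁ * φ s 1 = -lam₀ := by linarith
    have ham₁ : φ s' 0 + ε₁ * φ s' 1 = -lam₀ := by linarith
    have hq0 := hquad s hs
    have hq1 := hquad s' hs'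
    rw [his] at hq0
    rw [his'] at hq1
    norm_num at hq0 hq1
    have q₀ : (φ s 0)^2*(c*b) + (ε₁*φ s 1)^2*(b*a) = (b*a)*(c*b) := by
      rw [hsq ε₁ _ hε₁, mul_comm b a, hab, mul_comm c b, hbc]
      exact quad_convert (by positivity) (by positivity) hq0
    have q₁ : (φ s' 0)^2*(c*b) + (ε₁*φ s' 1)^2*(b*a) = (b*a)*(c*b) := by
      rw [hsq ε₁ _ hε₁, mul_comm b a, hab, mul_comm c b, hbc]
      exact quad_convert (by positivity) (by positivity) hq1
    have hσ : -(ε₁*ε₂) = 1 ∨ -(ε₁*ε₂) = -1 := by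
      rcases hε₁ with rfl | rfl <;> rcases hε₂ with rfl | rfl <;> norm_num
    have hae : ∀ᵐ t ∂(volume.restrict (Set.Ioo s s')),
        HasDerivAt (fun t => ε₂ * φ t 2)
          ((-(ε₁*ε₂))*(a * (ε₁ * φ t 1) - c * (φ t 0))) t := by
      filter_upwards [hφd', hu1val] with t htd hu1
      have hD := ((hasDerivAt_pi.mp htd) 2).const_mul ε₂
      refine hD.congr_deriv ?_
      rw [Pm_mulVec2, hu1, ha_def, hc_def]
      rcases hε₁ with rfl | rfl <;> ring
    exact key_lemma hss hb ha hc hσ (by rw [mul_comm b a, hab]; exact hlam₀) K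
      (hLip 2 ε₂ (habs1 ε₂ hε₂)) hgc (hcomp 0) hae
      (by simp [his]) (by simp [his']) hsgn2 q₀ q₁ ham₀ ham₁ hgs hgs'
end
end

section
/- Let 0 < α < π/4, 0 < β ≤ π/4, let λ₀ ∈ ℝ with −cos α < λ₀ < 0, let u₁, u₂ ∈ {−1, +1} be constants, and let φ = (φ₀, φ₁, φ₂) : [s, ∞) → ℝ³ solve φ′(t) = P(u₁,u₂)·φ(t). Assume φ₂(s) = 0, φ₁(s) ≠ 0, u₁·φ₁(s) = |φ₁(s)|, φ₀(s) + |φ₁(s)| + λ₀ = 0, and φ₀(s)²/cos²α + φ₁(s)²/(sin²α·sin²β) = 1. Then there exists exactly one t ∈ (0, π) with φ₁(s + t) = 0. -/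
open MeasureTheory Matrix Real

noncomputable section

/-- The denominator-cleared version of `Pm`:  `Mm = (cos α * sin β * cos β) • Pm`. -/
def Mm (α β u₁ u₂ : ℝ) : Matrix (Fin 3) (Fin 3) ℝ :=
  !![0, (Real.cos α)^2*(Real.cos β)^2*u₂, -((Real.cos α)^2*(Real.sin β)^2*u₁);
     -((Real.sin α)^2*(Real.sin β)^2*(Real.cos β)^2*u₂), 0, (Real.cos α)^2*(Real.sin β)^2;
     (Real.sin α)^2*(Real.sin β)^2*(Real.cos β)^2*u₁, -((Real.cos α)^2*(Real.cos β)^2), 0]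

set_option maxHeartbeats 1000000 in
lemma Mm_cube (α β u₁ u₂ : ℝ) (hu₁ : u₁^2 = 1) (hu₂ : u₂^2 = 1) :
    Mm α β u₁ u₂ * (Mm α β u₁ u₂ * Mm α β u₁ u₂)
      = (-(Real.cos α * Real.sin β * Real.cos β)^2) • Mm α β u₁ u₂ := by
  have ha := Real.sin_sq_add_cos_sq α
  have hb := Real.sin_sq_add_cos_sq β
  ext i j
  fin_cases i <;> fin_cases j <;>
    simp [Mm, Matrix.mul_apply, Fin.sum_univ_three, Matrix.smul_apply]
  · ring
  · linear_combination ((-1)*Real.cos α^4*Real.sin β^2*Real.cos β^6*u₂^3 + (-1)*Real.cos α^4*Real.sin β^4*Real.cos β^4*u₁^2*u₂) * ha + ((1)*Real.cos α^4*Real.cos β^6*u₂ + (-1)*Real.cos α^4*Real.cos β^6*u₂^3 + (-1)*Real.cos α^4*Real.sin β^2*Real.cos β^4*u₁^2*u₂ + (-1)*Real.cos α^6*Real.cos β^6*u₂ + (1)*Real.cos α^6*Real.cos β^6*u₂^3 + (1)*Real.cos α^6*Real.sin β^2*Real.cos β^4*u₁^2*u₂) * hb + ((-1)*Real.cos α^4*Real.sin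 β^2*Real.cos β^4*u₂ + (1)*Real.cos α^4*Real.sin β^2*Real.cos β^6*u₂ + (1)*Real.cos α^6*Real.sin β^2*Real.cos β^4*u₂ + (-1)*Real.cos α^6*Real.sin β^2*Real.cos β^6*u₂) * hu₁ + ((-1)*Real.cos α^4*Real.cos β^6*u₂ + (1)*Real.cos α^4*Real.cos β^8*u₂ + (1)*Real.cos α^6*Real.cos β^6*u₂ + (-1)*Real.cos α^6*Real.cos β^8*u₂) * hu₂
  · linear_combination ((1)*Real.cos α^4*Real.sin β^4*Real.cos β^4*u₁*u₂^2 + (1)*Real.cos α^4*Real.sin β^6*Real.cos β^2*u₁^3) * ha + ((-1)*Real.cos α^4*Real.sin β^2*Real.cos β^4*u₁ + (1)*Real.cos α^4*Real.sin β^2*Real.cos β^4*u₁*u₂^2 + (1)*Real.cos α^4*Real.sin β^4*Real.cos β^2*u₁^3 + (1)*Real.cos α^6*Real.sin β^2*Real.cos β^4*u₁ + (-1)*Real.cos α^6*Real.sin β^2*Real.cos β^4*u₁*u₂^2 + (-1)*Real.cos α^6*Real.sin β^4*Real.cos β^2*u₁^3) * hb + ((1)*Real.cos α^4*Real.sin β^4*Real.cos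 β^2*u₁ + (-1)*Real.cos α^4*Real.sin β^4*Real.cos β^4*u₁ + (-1)*Real.cos α^6*Real.sin β^4*Real.cos β^2*u₁ + (1)*Real.cos α^6*Real.sin β^4*Real.cos β^4*u₁) * hu₁ + ((1)*Real.cos α^4*Real.sin β^2*Real.cos β^4*u₁ + (-1)*Real.cos α^4*Real.sin β^2*Real.cos β^6*u₁ + (-1)*Real.cos α^6*Real.sin β^2*Real.cos β^4*u₁ + (1)*Real.cos α^6*Real.sin β^2*Real.cos β^6*u₁) * hu₂
  · linear_combination ((1)*Real.cos α^2*Real.sin β^2*Real.cos β^6*u₂ + (-1)*Real.cos α^2*Real.sin β^2*Real.cos β^8*u₂ + (-1)*Real.cos α^2*Real.sin β^4*Real.cos β^6*u₂ + (-1)*Real.cos α^4*Real.sin β^2*Real.cos β^6*u₂ + (1)*Real.cos α^4*Real.sin β^2*Real.cos β^8*u₂ + (1)*Real.cos α^4*Real.sin β^4*Real.cos β^6*u₂ + (1)*Real.sin α^2*Real.cos α^2*Real.sin β^4*Real.cos β^6*u₂^3 + (1)*Real.sin α^2*Real.cos α^2*Real.sin β^6*Real.cos β^4*u₁^2*u₂)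 * ha + ((-1)*Real.cos α^2*Real.sin β^2*Real.cos β^6*u₂ + (2)*Real.cos α^4*Real.sin β^2*Real.cos β^6*u₂ + (-1)*Real.cos α^6*Real.sin β^2*Real.cos β^6*u₂ + (1)*Real.sin α^2*Real.cos α^2*Real.sin β^2*Real.cos β^6*u₂^3 + (1)*Real.sin α^2*Real.cos α^2*Real.sin β^4*Real.cos β^4*u₁^2*u₂ + (-1)*Real.sin α^2*Real.cos α^4*Real.sin β^2*Real.cos β^6*u₂^3 + (-1)*Real.sin α^2*Real.cos α^4*Real.sin β^4*Real.cos β^4*u₁^2*u₂) * hb + ((1)*Real.sin α^2*Real.cos α^2*Real.sin β^4*Real.cos β^4*u₂ + (-1)*Real.sin α^2*Real.cos α^2*Real.sin β^4*Real.cos β^6*u₂ + (-1)*Real.sin α^2*Real.cos α^4*Real.sin β^4*Real.cos β^4*u₂ + (1)*Real.sin α^2*Real.cos α^4*Real.sin β^4*Real.cos β^6*u₂) * hu₁ + ((1)*Real.sin α^2*Real.cos α^2*Real.sin β^2*Real.cos β^6*u₂ + (-1)*Real.sin α^2*Real.cos α^2*Real.sin β^2*Real.cos β^8*u₂ + (-1)*Real.sin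 α^2*Real.cos α^4*Real.sin β^2*Real.cos β^6*u₂ + (1)*Real.sin α^2*Real.cos α^4*Real.sin β^2*Real.cos β^8*u₂) * hu₂
  · ring
  · linear_combination ((-1)*Real.cos α^4*Real.sin β^4*Real.cos β^4*u₂^2 + (-1)*Real.cos α^4*Real.sin β^6*Real.cos β^2*u₁^2) * ha + ((1)*Real.cos α^4*Real.sin β^2*Real.cos β^4 + (-1)*Real.cos α^4*Real.sin β^2*Real.cos β^4*u₂^2 + (-1)*Real.cos α^4*Real.sin β^4*Real.cos β^2*u₁^2 + (-1)*Real.cos α^6*Real.sin β^2*Real.cos β^4 + (1)*Real.cos α^6*Real.sin β^2*Real.cos β^4*u₂^2 + (1)*Real.cos α^6*Real.sin β^4*Real.cos β^2*u₁^2) * hb + ((-1)*Real.cos α^4*Real.sin β^4*Real.cos β^2 + (1)*Real.cos α^4*Real.sin β^4*Real.cos β^4 + (1)*Real.cos α^6*Real.sin β^4*Real.cos β^2 + (-1)*Real.cos α^6*Real.sin β^4*Real.cos β^4) * hu₁ + ((-1)*Real.cos α^4*Real.sin β^2*Real.cos β^4 + (1)*Real.cos α^4*Real.sin β^2*Real.cos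 β^6 + (1)*Real.cos α^6*Real.sin β^2*Real.cos β^4 + (-1)*Real.cos α^6*Real.sin β^2*Real.cos β^6) * hu₂
  · linear_combination ((-1)*Real.cos α^2*Real.sin β^2*Real.cos β^6*u₁ + (1)*Real.cos α^2*Real.sin β^2*Real.cos β^8*u₁ + (1)*Real.cos α^2*Real.sin β^4*Real.cos β^6*u₁ + (1)*Real.cos α^4*Real.sin β^2*Real.cos β^6*u₁ + (-1)*Real.cos α^4*Real.sin β^2*Real.cos β^8*u₁ + (-1)*Real.cos α^4*Real.sin β^4*Real.cos β^6*u₁ + (-1)*Real.sin α^2*Real.cos α^2*Real.sin β^4*Real.cos β^6*u₁*u₂^2 + (-1)*Real.sin α^2*Real.cos α^2*Real.sin β^6*Real.cos β^4*u₁^3) * ha + ((1)*Real.cos α^2*Real.sin β^2*Real.cos β^6*u₁ + (-2)*Real.cos α^4*Real.sin β^2*Real.cos β^6*u₁ + (1)*Real.cos α^6*Real.sin β^2*Real.cos β^6*u₁ + (-1)*Real.sin α^2*Real.cos α^2*Real.sin β^2*Real.cos β^6*u₁*u₂^2 + (-1)*Real.sin α^2*Real.cos α^2*Real.sin β^4*Real.cos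 β^4*u₁^3 + (1)*Real.sin α^2*Real.cos α^4*Real.sin β^2*Real.cos β^6*u₁*u₂^2 + (1)*Real.sin α^2*Real.cos α^4*Real.sin β^4*Real.cos β^4*u₁^3) * hb + ((-1)*Real.sin α^2*Real.cos α^2*Real.sin β^4*Real.cos β^4*u₁ + (1)*Real.sin α^2*Real.cos α^2*Real.sin β^4*Real.cos β^6*u₁ + (1)*Real.sin α^2*Real.cos α^4*Real.sin β^4*Real.cos β^4*u₁ + (-1)*Real.sin α^2*Real.cos α^4*Real.sin β^4*Real.cos β^6*u₁) * hu₁ + ((-1)*Real.sin α^2*Real.cos α^2*Real.sin β^2*Real.cos β^6*u₁ + (1)*Real.sin α^2*Real.cos α^2*Real.sin β^2*Real.cos β^8*u₁ + (1)*Real.sin α^2*Real.cos α^4*Real.sin β^2*Real.cos β^6*u₁ + (-1)*Real.sin α^2*Real.cos α^4*Real.sin β^2*Real.cos β^8*u₁) * hu₂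
  · linear_combination ((1)*Real.cos α^4*Real.sin β^2*Real.cos β^6*u₂^2 + (1)*Real.cos α^4*Real.sin β^4*Real.cos β^4*u₁^2) * ha + ((-1)*Real.cos α^4*Real.cos β^6 + (1)*Real.cos α^4*Real.cos β^6*u₂^2 + (1)*Real.cos α^4*Real.sin β^2*Real.cos β^4*u₁^2 + (1)*Real.cos α^6*Real.cos β^6 + (-1)*Real.cos α^6*Real.cos β^6*u₂^2 + (-1)*Real.cos α^6*Real.sin β^2*Real.cos β^4*u₁^2) * hb + ((1)*Real.cos α^4*Real.sin β^2*Real.cos β^4 + (-1)*Real.cos α^4*Real.sin β^2*Real.cos β^6 + (-1)*Real.cos α^6*Real.sin β^2*Real.cos β^4 + (1)*Real.cos α^6*Real.sin β^2*Real.cos β^6) * hu₁ + ((1)*Real.cos α^4*Real.cos β^6 + (-1)*Real.cos α^4*Real.cos β^8 + (-1)*Real.cos α^6*Real.cos β^6 + (1)*Real.cos α^6*Real.cos β^8) * hu₂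
  · ring

lemma Pm_eq_smul_Mm (α β u₁ u₂ : ℝ) (hca : Real.cos α ≠ 0) (hsb : Real.sin β ≠ 0)
    (hcb : Real.cos β ≠ 0) :
    Pm α β u₁ u₂ = (Real.cos α * Real.sin β * Real.cos β)⁻¹ • Mm α β u₁ u₂ := by
  ext i j
  fin_cases i <;> fin_cases j <;>
      simp [Pm, Mm, Real.tan_eq_sin_div_cos, Matrix.smul_apply] <;>
      (try field_simp) <;> (try ring)

lemma Pm_cube (α β u₁ u₂ : ℝ) (hu₁ : u₁^2 = 1) (hu₂ : u₂^2 = 1)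
    (hca : Real.cos α ≠ 0) (hsb : Real.sin β ≠ 0) (hcb : Real.cos β ≠ 0) :
    Pm α β u₁ u₂ * (Pm α β u₁ u₂ * Pm α β u₁ u₂) = -Pm α β u₁ u₂ := by
  have hd : (Real.cos α * Real.sin β * Real.cos β) ≠ 0 := by
    simp [hca, hsb, hcb]
  rw [Pm_eq_smul_Mm α β u₁ u₂ hca hsb hcb]
  simp only [Matrix.smul_mul, Matrix.mul_smul, smul_smul]
  rw [Mm_cube α β u₁ u₂ hu₁ hu₂, smul_smul, ← neg_smul]
  congr 1
  field_simp

/-- The key inequality `2 m λ < x` for the switching analysis. -/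
lemma key_ineq (m X lam ca : ℝ) (hm0 : 0 < m) (hX0 : 0 < X) (hlampos : 0 < lam)
    (hlamlt : lam < ca) (hca : 0 < ca) (hm14 : m < 1/4) (hmc : m + ca^2 ≤ 1)
    (hquadX : (lam - X)^2*m + ca^2*X^2 = ca^2*m) :
    2*m*lam < X := by
  rcases le_or_gt (lam - X) 0 with hle | ha'
  · nlinarith
  · have h5 : lam - X < ca - X := by linarith
    have hsq : (lam - X)*(lam - X) < (ca - X)*(ca - X) :=
      mul_self_lt_mul_self ha'.le h5
    have h6 : m*(ca - X)^2 > ca^2*m - ca^2*X^2 := by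
      nlinarith [mul_lt_mul_of_pos_left hsq hm0]
    have h7 : 2*m*ca < X*(m + ca^2) := by
      nlinarith [hX0, hm0, hca]
    have hpos2 : 0 < X*(m + ca^2) + 2*m*ca := by positivity
    have hs1 : X^2*(m + ca^2)^2 > 4*m^2*ca^2 := by
      nlinarith [h7, hpos2]
    have hs2 : (1 - (m + ca^2)) * (1 + (m + ca^2) - 4*m) ≥ 0 := by
      apply mul_nonneg (by linarith)
      nlinarith [sq_nonneg ca]
    have hs2' : (1-2*m)^2 + 4*m*ca^2 ≥ (m + ca^2)^2 := by nlinarith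
    have h8 : (X*(1-2*m))^2 > (2*m*(lam - X))^2 := by
      nlinarith [hs1, hs2', hquadX, sq_nonneg X, mul_pos hm0 hm0]
    have hsum : 0 < X*(1-2*m) + 2*m*(lam - X) :=
      add_pos (mul_pos hX0 (by linarith)) (mul_pos (by linarith) ha')
    have h9 : 2*m*(lam - X) < X*(1-2*m) := by
      clear hsq h6 h7 hs1 hs2 hs2' hquadX h5 hmc hm14 hlamlt hpos2
      nlinarith [h8, hsum]
    linarith

/-- Unique positive root of the downward quadratic `-A y² + 2 q y + G₀`. -/
lemma quad_unique_pos_root (A G0 q y : ℝ) (hA : 0 < A) (hG : 0 < G0) (hy : 0 < y) :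
    -A*y^2 + 2*q*y + G0 = 0 ↔ y = (q + Real.sqrt (q^2 + A*G0))/A := by
  have hS0 : 0 < q^2 + A*G0 := by nlinarith [sq_nonneg q, mul_pos hA hG]
  set S := Real.sqrt (q^2 + A*G0) with hSdef
  have hS : S^2 = q^2 + A*G0 := Real.sq_sqrt hS0.le
  have hSpos : 0 < S := Real.sqrt_pos.mpr hS0
  have hSq : q < S := by nlinarith [mul_pos hA hG]
  constructor
  · intro h
    have hfac : (A*y - (q + S)) * (A*y - (q - S)) = 0 := by
      linear_combination (-A)*h - hS
    rcases mul_eq_zero.mp hfac with h' | h'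
    · rw [eq_div_iff hA.ne']
      linarith [h']
    · exfalso
      nlinarith [mul_pos hA hy]
  · intro h
    have hAy : A*y = q + S := by
      rw [h]
      field_simp
    have hz : A*(-A*y^2 + 2*q*y + G0) = 0 := by
      linear_combination (-(A*y) + q - S)*hAy - hS
    exact (mul_eq_zero.mp hz).resolve_left hA.ne'

set_option maxHeartbeats 1000000 in
theorem next_switching_in_0_pi
    (α β : ℝ) (hα : 0 < α) (hα' : α < π/4) (hβ : 0 < β) (hβ' : β ≤ π/4)
    (lam₀ : ℝ) (hlam₀ : -Real.cos α < lam₀) (hlam₀' : lam₀ < 0)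
    (u₁ u₂ : ℝ) (hu₁ : u₁ = -1 ∨ u₁ = 1) (hu₂ : u₂ = -1 ∨ u₂ = 1)
    (s : ℝ) (φ : ℝ → Fin 3 → ℝ)
    (hφd : ∀ t ∈ Set.Ici s, HasDerivAt φ ((Pm α β u₁ u₂).mulVec (φ t)) t)
    (h2 : φ s 2 = 0) (h1 : φ s 1 ≠ 0)
    (hmax : u₁ * φ s 1 = |φ s 1|)
    (hham : φ s 0 + |φ s 1| + lam₀ = 0)
    (hquad : (φ s 0)^2/(Real.cos α)^2 + (φ s 1)^2/((Real.sin α)^2 * (Real.sin β)^2) = 1) :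
    ∃! t : ℝ, t ∈ Set.Ioo 0 π ∧ φ (s + t) 1 = 0 := by
  have hpi : (3:ℝ) < π := Real.pi_gt_three
  have hca : 0 < Real.cos α := Real.cos_pos_of_mem_Ioo ⟨by linarith, by linarith⟩
  have hsa : 0 < Real.sin α := Real.sin_pos_of_pos_of_lt_pi hα (by linarith)
  have hcb : 0 < Real.cos β := Real.cos_pos_of_mem_Ioo ⟨by linarith, by linarith⟩
  have hsb : 0 < Real.sin β := Real.sin_pos_of_pos_of_lt_pi hβ (by linarith)
  have hu1sq : u₁^2 = 1 := by rcases hu₁ with h|h <;> simp [h]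
  have hu2sq : u₂^2 = 1 := by rcases hu₂ with h|h <;> simp [h]
  have hu1ne : u₁ ≠ 0 := by rcases hu₁ with h|h <;> simp [h]
  set P := Pm α β u₁ u₂ with hPdef
  set w := P.mulVec (φ s) with hwdef
  set v := P.mulVec w with hvdef
  have hPv : P.mulVec v = -w := by
    rw [hvdef, hwdef, Matrix.mulVec_mulVec, Matrix.mulVec_mulVec,
      show P * P * P = P * (P * P) by rw [Matrix.mul_assoc], hPdef,
      Pm_cube α β u₁ u₂ hu1sq hu2sq hca.ne' hsb.ne' hcb.ne',
      Matrix.neg_mulVec, ← hPdef, ← hwdef]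
  set ψ : ℝ → Fin 3 → ℝ :=
    fun t => φ s + (Real.sin (t - s) • w + (1 - Real.cos (t - s)) • v) with hψdef
  have hψd : ∀ t : ℝ, HasDerivAt ψ (P.mulVec (ψ t)) t := by
    intro t
    have hsin : HasDerivAt (fun r : ℝ => Real.sin (r - s)) (Real.cos (t - s)) t := by
      simpa using ((hasDerivAt_id t).sub_const s).sin
    have hcos : HasDerivAt (fun r : ℝ => 1 - Real.cos (r - s)) (Real.sin (t - s)) t := by
      have h := (Real.hasDerivAt_cos (t - s)).comp t ((hasDerivAt_id t).sub_const s)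
      simpa using h.const_sub 1
    have hd := ((hsin.smul_const w).add (hcos.smul_const v)).const_add (φ s)
    convert hd using 1
    show P.mulVec (φ s + (Real.sin (t - s) • w + (1 - Real.cos (t - s)) • v)) = _
    rw [Matrix.mulVec_add, Matrix.mulVec_add, Matrix.mulVec_smul, Matrix.mulVec_smul,
      hPv, ← hwdef, ← hvdef]
    module
    all_goals rfl
  have hK : ∃ K : NNReal, LipschitzWith K fun x : Fin 3 → ℝ => P.mulVec x := by
    have h := (LinearMap.toContinuousLinearMap (Matrix.mulVecLin P)).lipschitz
    have he : ⇑(LinearMap.toContinuousLinearMap (Matrix.mulVecLin P))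
        = fun x : Fin 3 → ℝ => P.mulVec x := by
      funext x
      simp [Matrix.mulVecLin_apply]
    rw [he] at h
    exact ⟨_, h⟩
  obtain ⟨K, hKlip⟩ := hK
  have heq : Set.EqOn φ ψ (Set.Icc s (s + π)) := by
    apply ODE_solution_unique (v := fun _ x => P.mulVec x) (fun _ => hKlip)
    · exact fun t ht => ((hφd t ht.1).continuousAt).continuousWithinAt
    · exact fun t ht => (hφd t ht.1).hasDerivWithinAt
    · exact fun t _ => ((hψd t).continuousAt).continuousWithinAt
    · exact fun t _ => (hψd t).hasDerivWithinAt
    · simp [hψdef]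
  have hval : ∀ t ∈ Set.Icc (0:ℝ) π,
      φ (s + t) 1 = φ s 1 + (Real.sin t * w 1 + (1 - Real.cos t) * v 1) := by
    intro t ht
    have hmem : s + t ∈ Set.Icc s (s + π) := ⟨by linarith [ht.1], by linarith [ht.2]⟩
    rw [heq hmem]
    simp [hψdef, add_sub_cancel_left]
  -- scalar data
  set m := Real.sin α ^ 2 * Real.sin β ^ 2 with hmdef
  set X := |φ s 1| with hXdef
  set lam := -lam₀ with hlamdef
  have hX0 : 0 < X := abs_pos.mpr h1
  have hm0 : 0 < m := by positivity
  have hlampos : 0 < lam := by simp [hlamdef]; linarith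
  have hlamlt : lam < Real.cos α := by simp [hlamdef]; linarith
  have halam : φ s 0 = lam - X := by simp only [hlamdef]; linarith [hham]
  have hsin2a : Real.sin α ^ 2 < 1/2 := by
    have h4 : Real.sin α < Real.sin (π/4) := by
      apply Real.strictMonoOn_sin ⟨by linarith, by linarith⟩ ⟨by linarith, by linarith⟩ hα'
    rw [Real.sin_pi_div_four] at h4
    nlinarith [Real.sq_sqrt (show (0:ℝ) ≤ 2 by norm_num), Real.sqrt_nonneg 2]
  have hsin2b : Real.sin β ^ 2 ≤ 1/2 := by
    have h4 : Real.sin β ≤ Real.sin (π/4) := by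
      apply Real.strictMonoOn_sin.monotoneOn ⟨by linarith, by linarith⟩
        ⟨by linarith, by linarith⟩ hβ'
    rw [Real.sin_pi_div_four] at h4
    nlinarith [Real.sq_sqrt (show (0:ℝ) ≤ 2 by norm_num), Real.sqrt_nonneg 2]
  have hm14 : m < 1/4 := by
    rw [hmdef]
    nlinarith [sq_nonneg (Real.sin α), sq_nonneg (Real.sin β)]
  have hmc : m + Real.cos α ^ 2 ≤ 1 := by
    rw [hmdef]
    nlinarith [Real.sin_sq_add_cos_sq α, sq_nonneg (Real.sin α), Real.sin_sq_le_one β]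
  have hquad' : (φ s 0)^2*m + Real.cos α^2*(φ s 1)^2 = Real.cos α^2*m := by
    rw [hmdef]
    have hne1 : Real.cos α ^ 2 ≠ 0 := by positivity
    have hne2 : (Real.sin α)^2 * (Real.sin β)^2 ≠ 0 := by positivity
    field_simp at hquad
    linear_combination hquad
  have hXsq : X^2 = (φ s 1)^2 := sq_abs _
  -- the key inequality : 2 m lam < X
  have hkey : 2*m*lam < X := by
    have hquadX : (lam - X)^2*m + Real.cos α^2*X^2 = Real.cos α^2*m := by
      rw [hXsq, ← halam]; exact hquad'
    exact key_ineq m X lam (Real.cos α) hm0 hX0 hlampos hlamlt hca hm14 hmc hquadX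
  -- value of v 1
  have hDval : v 1 = -(Real.sin α^2*Real.cos β^2*u₂^2 + Real.cos α^2)*(φ s 1)
      + (Real.sin α ^ 2 * Real.sin β ^ 2)*u₁*(φ s 0) := by
    rw [hvdef, hwdef, hPdef]
    simp [Pm, Matrix.mulVec, dotProduct, Fin.sum_univ_three, Real.tan_eq_sin_div_cos, h2]
    field_simp
    ring
  have hDsimp : v 1 = -((1 - m)*(φ s 1)) + m*u₁*(φ s 0) := by
    rw [hDval, hmdef]
    linear_combination (-(Real.sin α^2*Real.cos β^2*(φ s 1)))*hu2sq
      + (-(Real.sin α^2*(φ s 1)))*(Real.sin_sq_add_cos_sq β)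
      + (-(φ s 1))*(Real.sin_sq_add_cos_sq α)
  have hv1u : u₁ * v 1 = m*lam - X := by
    rw [hDsimp]
    linear_combination (m - 1)*hmax + (m*(φ s 0))*hu1sq + m*halam
  have hA1 : 0 < X - 2*m*lam := by linarith
  set u₀ := ((u₁*w 1) + Real.sqrt ((u₁*w 1)^2 + (X - 2*m*lam)*X))/(X - 2*m*lam) with hu₀def
  have hu₀pos : 0 < u₀ := by
    apply div_pos _ hA1
    have h2' : |u₁*w 1| < Real.sqrt ((u₁*w 1)^2 + (X - 2*m*lam)*X) := by
      rw [← Real.sqrt_sq_eq_abs]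
      apply Real.sqrt_lt_sqrt (sq_nonneg _)
      nlinarith [mul_pos hA1 hX0]
    have h3' := neg_abs_le (u₁*w 1)
    linarith
  have hchar : ∀ t ∈ Set.Ioo (0:ℝ) π, (φ (s + t) 1 = 0 ↔ Real.tan (t/2) = u₀) := by
    intro t ht
    have hγ : 0 < Real.cos (t/2) :=
      Real.cos_pos_of_mem_Ioo ⟨by linarith [ht.1], by linarith [ht.2]⟩
    have hσ : 0 < Real.sin (t/2) :=
      Real.sin_pos_of_pos_of_lt_pi (by linarith [ht.1]) (by linarith [ht.2, Real.pi_pos])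
    have hy : 0 < Real.tan (t/2) := by
      rw [Real.tan_eq_sin_div_cos]; positivity
    have hsint : Real.sin t = 2*Real.sin (t/2)*Real.cos (t/2) := by
      rw [← Real.sin_two_mul]
      congr 1
      ring
    have hcost : Real.cos t = 1 - 2*Real.sin (t/2)^2 := by
      have hc2 := Real.cos_two_mul (t/2)
      have hp := Real.sin_sq_add_cos_sq (t/2)
      rw [show 2*(t/2) = t by ring] at hc2
      linarith
    have hFt := hval t ⟨ht.1.le, ht.2.le⟩
    have hiden : u₁ * (φ (s + t) 1)
        = -(X - 2*m*lam)*Real.sin (t/2)^2 + 2*(u₁*w 1)*(Real.sin (t/2)*Real.cos (t/2))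
          + X*Real.cos (t/2)^2 := by
      rw [hFt]
      linear_combination (u₁*w 1)*hsint - (u₁*v 1)*hcost + (2*Real.sin (t/2)^2)*hv1u
        - X*(Real.sin_sq_add_cos_sq (t/2)) + hmax
    have hiden2 : u₁ * (φ (s + t) 1)
        = Real.cos (t/2)^2
          * (-(X - 2*m*lam)*Real.tan (t/2)^2 + 2*(u₁*w 1)*Real.tan (t/2) + X) := by
      rw [hiden, Real.tan_eq_sin_div_cos]
      field_simp
    constructor
    · intro h0
      have hz : Real.cos (t/2)^2
          * (-(X - 2*m*lam)*Real.tan (t/2)^2 + 2*(u₁*w 1)*Real.tan (t/2) + X) = 0 := by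
        rw [← hiden2, h0, mul_zero]
      have hq0 : -(X - 2*m*lam)*Real.tan (t/2)^2 + 2*(u₁*w 1)*Real.tan (t/2) + X = 0 := by
        rcases mul_eq_zero.mp hz with h' | h'
        · exact absurd h' (by positivity)
        · exact h'
      exact (quad_unique_pos_root (X - 2*m*lam) X (u₁*w 1) _ hA1 hX0 hy).mp hq0
    · intro htan
      have hq0 := (quad_unique_pos_root (X - 2*m*lam) X (u₁*w 1) _ hA1 hX0 hy).mpr htan
      have hz : u₁ * (φ (s + t) 1) = 0 := by rw [hiden2, hq0, mul_zero]
      rcases mul_eq_zero.mp hz with h' | h'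
      · exact absurd h' hu1ne
      · exact h'
  have harc0 : 0 < Real.arctan u₀ := by
    have := Real.arctan_strictMono hu₀pos
    rwa [Real.arctan_zero] at this
  have harc2 : Real.arctan u₀ < π/2 := Real.arctan_lt_pi_div_two u₀
  have hmem : 2*Real.arctan u₀ ∈ Set.Ioo (0:ℝ) π := ⟨by linarith, by linarith⟩
  refine ⟨2*Real.arctan u₀, ⟨hmem, ?_⟩, ?_⟩
  · apply (hchar _ hmem).mpr
    rw [show 2*Real.arctan u₀/2 = Real.arctan u₀ by ring, Real.tan_arctan]
  · rintro t' ⟨ht', h0'⟩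
    have htan' := (hchar t' ht').mp h0'
    have hhalf : t'/2 = Real.arctan u₀ := by
      rw [← Real.arctan_tan (x := t'/2) (by linarith [ht'.1, Real.pi_pos])
        (by linarith [ht'.2]), htan']
    linarith
end
end

section
/- Let 0 < α < π/4, 0 < β ≤ π/4, and 0 < μ < cos α. Then cos α · √(1 − μ² − sin²α·cos²β) > μ · sin α · sin β · (1 − 2·sin²α·cos²β). -/
open Real

set_option maxHeartbeats 1600000 in
theorem key_inequality
    (α β μ : ℝ) (hα : 0 < α) (hα' : α < π/4) (hβ : 0 < β) (hβ' : β ≤ π/4)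
    (hμ : 0 < μ) (hμ' : μ < Real.cos α) :
    μ * Real.sin α * Real.sin β * (1 - 2 * (Real.sin α)^2 * (Real.cos β)^2)
      < Real.cos α * Real.sqrt (1 - μ^2 - (Real.sin α)^2 * (Real.cos β)^2) := by
  have hπ : (0:ℝ) < π := Real.pi_pos
  have hs : 0 < Real.sin α := Real.sin_pos_of_pos_of_lt_pi hα (by nlinarith)
  have hc : 0 < Real.cos α := Real.cos_pos_of_mem_Ioo ⟨by nlinarith, by nlinarith⟩
  have hsb : 0 < Real.sin β := Real.sin_pos_of_pos_of_lt_pi hβ (by nlinarith)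
  have hcb : 0 < Real.cos β := Real.cos_pos_of_mem_Ioo ⟨by nlinarith, by nlinarith⟩
  have hpa : (Real.sin α)^2 + (Real.cos α)^2 = 1 := Real.sin_sq_add_cos_sq α
  have hpb : (Real.sin β)^2 + (Real.cos β)^2 = 1 := Real.sin_sq_add_cos_sq β
  have hμ2 : μ^2 < (Real.cos α)^2 := by nlinarith
  -- sin α < sin (π/4)
  have hslt : Real.sin α < Real.sin (π/4) := by
    exact Real.sin_lt_sin_of_lt_of_le_pi_div_two (by nlinarith) (by nlinarith) hα'
  have hs2 : (Real.sin α)^2 < 1/2 := by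
    rw [Real.sin_pi_div_four] at hslt
    nlinarith [Real.sq_sqrt (by norm_num : (2:ℝ) ≥ 0)]
  have hcb2 : (Real.cos β)^2 ≤ 1 := by nlinarith
  have hD : 0 < 1 - μ^2 - (Real.sin α)^2 * (Real.cos β)^2 := by nlinarith
  have hsq : Real.sqrt (1 - μ^2 - (Real.sin α)^2 * (Real.cos β)^2) > 0 :=
    Real.sqrt_pos.mpr hD
  rcases le_or_gt (μ * Real.sin α * Real.sin β * (1 - 2 * (Real.sin α)^2 * (Real.cos β)^2)) 0
    with h | h
  · exact lt_of_le_of_lt h (mul_pos hc hsq)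
  · have hc' : Real.cos α = Real.sqrt ((Real.cos α)^2) := (Real.sqrt_sq hc.le).symm
    rw [hc', ← Real.sqrt_mul (sq_nonneg _)]
    apply (Real.lt_sqrt h.le).mpr
    have h1 : 0 ≤ ((Real.cos α)^2 - μ^2) *
        ((Real.sin α)^2 * (Real.sin β)^2 * (1 - 2*(Real.sin α)^2*(Real.cos β)^2)^2) :=
      mul_nonneg (by nlinarith) (by positivity)
    have h2 : 0 < ((Real.cos α)^2 - μ^2) * (Real.cos α)^2 :=
      mul_pos (by nlinarith) (by positivity)
    have h3 : 0 < (Real.cos α)^2 * (Real.sin α)^2 * (Real.sin β)^2 *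
        ((Real.sin α)^2 * (Real.cos β)^2) * (1 - (Real.sin α)^2 * (Real.cos β)^2) := by
      have : 0 < 1 - (Real.sin α)^2 * (Real.cos β)^2 := by nlinarith
      positivity
    have e1 : (Real.cos α)^2 = 1 - (Real.sin α)^2 := by linarith
    have e2 : (Real.cos β)^2 = 1 - (Real.sin β)^2 := by linarith
    have key : (Real.cos α)^2 * (1 - μ^2 - (Real.sin α)^2*(Real.cos β)^2)
        - (μ * Real.sin α * Real.sin β * (1 - 2*(Real.sin α)^2*(Real.cos β)^2))^2
        = ((Real.cos α)^2 - μ^2) *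
            ((Real.cos α)^2 + (Real.sin α)^2*(Real.sin β)^2*(1 - 2*(Real.sin α)^2*(Real.cos β)^2)^2)
          + 4 * ((Real.cos α)^2 * (Real.sin α)^2 * (Real.sin β)^2 *
              ((Real.sin α)^2 * (Real.cos β)^2) * (1 - (Real.sin α)^2 * (Real.cos β)^2)) := by
      rw [e1, e2]; ring
    nlinarith [h1, h2, h3, key]
end

section
/- Let 0 < α < π/2, 0 < β < π/2, and u₁, u₂ ∈ {−1, +1}. Then the matrix P(u₁,u₂) satisfies P(u₁,u₂)³ = −P(u₁,u₂), and consequently its matrix exponential is exp(t·P(u₁,u₂)) = I + sin t · P(u₁,u₂) + (1 − cos t) · P(u₁,u₂)² for every t ∈ ℝ. -/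
open Matrix Real

noncomputable section

section ExpAux

variable {A : Type*} [Ring A] [Algebra ℝ A] [TopologicalSpace A] [IsTopologicalRing A]

omit [TopologicalSpace A] [IsTopologicalRing A] in
lemma pow_odd_of_cube (P : A) (hP : P ^ 3 = -P) (n : ℕ) :
    P ^ (2 * n + 1) = ((-1 : ℝ) ^ n) • P := by
  induction n with
  | zero => simp
  | succ n ih =>
    have h : 2 * (n + 1) + 1 = (2 * n + 1) + 2 := by ring
    rw [h, pow_add, ih, smul_mul_assoc]
    have h3 : P * P ^ 2 = P ^ 3 := by rw [← pow_succ']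
    rw [h3, hP, pow_succ, mul_smul, neg_one_smul]

omit [TopologicalSpace A] [IsTopologicalRing A] in
lemma pow_even_of_cube (P : A) (hP : P ^ 3 = -P) (n : ℕ) :
    P ^ (2 * n + 2) = ((-1 : ℝ) ^ n) • (P * P) := by
  have h : 2 * n + 2 = (2 * n + 1) + 1 := by ring
  rw [h, pow_succ, pow_odd_of_cube P hP, smul_mul_assoc]

variable [T2Space A] [ContinuousSMul ℝ A] [ContinuousAdd A]

set_option maxHeartbeats 1000000 in
lemma exp_of_cube (P : A) (hP : P ^ 3 = -P) (t : ℝ) :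
    NormedSpace.exp (t • P)
      = 1 + Real.sin t • P + (1 - Real.cos t) • (P * P) := by
  rw [NormedSpace.exp_eq_tsum ℝ]
  refine HasSum.tsum_eq ?_
  have key : ∀ n : ℕ, ((Nat.factorial n : ℝ))⁻¹ • (t • P) ^ n
      = (t ^ n / (Nat.factorial n : ℝ)) • P ^ n := by
    intro n
    rw [smul_pow, smul_smul, inv_mul_eq_div]
  have ho : HasSum
      (fun k : ℕ => ((Nat.factorial (2 * k + 1) : ℝ))⁻¹ • (t • P) ^ (2 * k + 1))
      (Real.sin t • P) := by
    have h := (Real.hasSum_sin t).smul_const P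
    convert h using 2 with n
    rw [key, pow_odd_of_cube P hP, smul_smul]
    congr 1
    ring
  have he : HasSum
      (fun k : ℕ => ((Nat.factorial (2 * k) : ℝ))⁻¹ • (t • P) ^ (2 * k))
      (1 + (1 - Real.cos t) • (P * P)) := by
    have h1 : HasSum
        (fun n : ℕ => (-((-1 : ℝ) ^ n * t ^ (2 * n) / (Nat.factorial (2 * n) : ℝ))) • (P * P))
        ((-Real.cos t) • (P * P)) := (Real.hasSum_cos t).neg.smul_const _
    have h2 := h1.update 0 (1 : A)
    have hfun : (fun k : ℕ => ((Nat.factorial (2 * k) : ℝ))⁻¹ • (t • P) ^ (2 * k))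
        = Function.update
            (fun n : ℕ => (-((-1 : ℝ) ^ n * t ^ (2 * n) / (Nat.factorial (2 * n) : ℝ))) • (P * P))
            0 (1 : A) := by
      funext n
      cases n with
      | zero => simp
      | succ n =>
        rw [Function.update_of_ne (Nat.succ_ne_zero n), key]
        have h : 2 * (n + 1) = 2 * n + 2 := by ring
        rw [h, pow_even_of_cube P hP, smul_smul]
        congr 1
        simp only [pow_succ]
        ring
    rw [hfun]
    convert h2 using 1
    · rfl
    simp
    module
  have h := HasSum.even_add_odd (f := fun n : ℕ => ((Nat.factorial n : ℝ))⁻¹ • (t • P) ^ n) he ho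
  convert h using 1
  abel

end ExpAux

lemma cube_aux (a d e u₁ u₂ : ℝ) (hkey : a * e + a * d + d * e = 1)
    (hu₁ : u₁ = -1 ∨ u₁ = 1) (hu₂ : u₂ = -1 ∨ u₂ = 1) :
    (!![0, a * u₂, -(d * u₁); -(e * u₂), 0, d; e * u₁, -a, 0] : Matrix (Fin 3) (Fin 3) ℝ) ^ 3
      = -(!![0, a * u₂, -(d * u₁); -(e * u₂), 0, d; e * u₁, -a, 0]) := by
  rcases hu₁ with h | h <;> subst h <;> rcases hu₂ with h | h <;> subst h <;>
  · simp only [mul_neg_one, mul_one, neg_neg]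
    rw [eq_neg_iff_add_eq_zero, pow_succ, pow_two, Matrix.mul_fin_three, Matrix.mul_fin_three]
    ext i j
    fin_cases i <;> fin_cases j <;>
      simp [Matrix.add_apply, Matrix.vecHead, Matrix.vecTail] <;>
      first
        | ring1
        | linear_combination a * hkey
        | linear_combination (-a) * hkey
        | linear_combination d * hkey
        | linear_combination (-d) * hkey
        | linear_combination e * hkey
        | linear_combination (-e) * hkey
        | linear_combination hkey
        | linear_combination -hkey

theorem P_cube_and_exp
    (α β : ℝ) (hα : 0 < α) (hα' : α < π/2) (hβ : 0 < β) (hβ' : β < π/2)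
    (u₁ u₂ : ℝ) (hu₁ : u₁ = -1 ∨ u₁ = 1) (hu₂ : u₂ = -1 ∨ u₂ = 1) :
    (Pm α β u₁ u₂)^3 = -(Pm α β u₁ u₂) ∧
    ∀ t : ℝ, NormedSpace.exp (t • Pm α β u₁ u₂)
      = 1 + Real.sin t • Pm α β u₁ u₂ + (1 - Real.cos t) • (Pm α β u₁ u₂ * Pm α β u₁ u₂) := by
  have hpi := Real.pi_pos
  have hαc : Real.cos α ≠ 0 := ne_of_gt (Real.cos_pos_of_mem_Ioo ⟨by linarith, hα'⟩)
  have hβc : Real.cos β ≠ 0 := ne_of_gt (Real.cos_pos_of_mem_Ioo ⟨by linarith, hβ'⟩)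
  have hβs : Real.sin β ≠ 0 := ne_of_gt (Real.sin_pos_of_pos_of_lt_pi hβ (by linarith))
  have ht : Real.tan β = Real.sin β / Real.cos β := Real.tan_eq_sin_div_cos β
  set a : ℝ := Real.cos α / Real.tan β with ha
  set d : ℝ := Real.cos α * Real.tan β with hd
  set e : ℝ := (Real.sin α) ^ 2 * Real.sin β * Real.cos β / Real.cos α with he
  have hae : a * e = (Real.sin α) ^ 2 * (Real.cos β) ^ 2 := by
    rw [ha, he, ht]; field_simp
  have had : a * d = (Real.cos α) ^ 2 := by
    rw [ha, hd, ht]; field_simp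
  have hde : d * e = (Real.sin α) ^ 2 * (Real.sin β) ^ 2 := by
    rw [hd, he, ht]; field_simp
  have hkey : a * e + a * d + d * e = 1 := by
    rw [hae, had, hde]
    have h1 := Real.sin_sq_add_cos_sq α
    have h2 := Real.sin_sq_add_cos_sq β
    nlinarith [h1, h2]
  have hPm : Pm α β u₁ u₂ = !![0, a * u₂, -(d * u₁); -(e * u₂), 0, d; e * u₁, -a, 0] := by
    ext i j
    fin_cases i <;> fin_cases j <;> simp [Pm, ha, hd, he] <;> ring
  have h3 : (Pm α β u₁ u₂) ^ 3 = -(Pm α β u₁ u₂) := by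
    rw [hPm]
    exact cube_aux a d e u₁ u₂ hkey hu₁ hu₂
  exact ⟨h3, fun t => exp_of_cube _ h3 t⟩
end
end

section
/- Let 0 < α < π/4 and β = π/4. Then v(0) = s_max and v(s_max) = s_max, where s_max := arccos(−sin²α/(1+cos²α)). -/
open Real

noncomputable section

/-- The maximal duration of the first bang arc. -/
def smax (α : ℝ) : ℝ := Real.arccos (-(Real.sin α)^2 / (1 + (Real.cos α)^2))

def Af (α s : ℝ) : ℝ := 8 * Real.cos α * (Real.sin α)^2 * Real.sin s
def Bf (α s : ℝ) : ℝ := 2 * (Real.sin (2*α))^2 * Real.cos s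
def Cf (α s : ℝ) : ℝ := 4 * (Real.sin α)^4 * Real.cos (2*s)
def df (α : ℝ) : ℝ := (Real.sin (2*α))^2
def ef (α : ℝ) : ℝ := 5 + 2 * Real.cos (2*α) + Real.cos (4*α)

/-- The duration between interior switchings, as a function of the first switching time. -/
def vf (α s : ℝ) : ℝ :=
  Real.arccos ((df α - Af α s - Bf α s - Cf α s) / (ef α - Af α s + Bf α s))

theorem v_at_endpoints
    (α : ℝ) (hα : 0 < α) (hα' : α < π/4) :
    vf α 0 = smax α ∧ vf α (smax α) = smax α := by
  have hpi : (0:ℝ) < π := Real.pi_pos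
  have hc : 0 < Real.cos α := by
    apply Real.cos_pos_of_mem_Ioo
    constructor <;> nlinarith
  have hc2 : Real.cos (π/4) < Real.cos α :=
    Real.cos_lt_cos_of_nonneg_of_le_pi hα.le (by nlinarith) hα'
  have hsq2 : Real.sqrt 2 ^ 2 = 2 := Real.sq_sqrt (by norm_num)
  have hsq2' : (0:ℝ) ≤ Real.sqrt 2 := Real.sqrt_nonneg 2
  have hu : 1/2 < (Real.cos α)^2 := by
    rw [Real.cos_pi_div_four] at hc2
    nlinarith
  have hs2 : Real.sin α ^ 2 = 1 - Real.cos α ^ 2 := Real.sin_sq α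
  have hP : (0:ℝ) < 1 + Real.cos α ^ 2 := by positivity
  set c := Real.cos α with hcdef
  -- bounds on x = -(sin α)^2/(1+c^2)
  have hx1 : (-1:ℝ) ≤ -(Real.sin α)^2 / (1 + c^2) := by
    rw [le_div_iff₀ hP]
    nlinarith [Real.sin_sq_le_one α]
  have hx2 : -(Real.sin α)^2 / (1 + c^2) ≤ 1 := by
    apply div_le_one_of_le₀ <;> nlinarith [sq_nonneg (Real.sin α)]
  have hcos : Real.cos (smax α) = -(Real.sin α)^2 / (1 + c^2) :=
    Real.cos_arccos hx1 hx2
  have hsin : Real.sin (smax α) = 2*c/(1+c^2) := by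
    rw [smax, Real.sin_arccos]
    rw [show 1 - (-(Real.sin α)^2 / (1 + c^2))^2 = (2*c/(1+c^2))^2 by
      field_simp; nlinarith [hs2]]
    exact Real.sqrt_sq (by positivity)
  have hcos2 : Real.cos (2 * smax α) = 2 * (-(Real.sin α)^2 / (1 + c^2))^2 - 1 := by
    rw [Real.cos_two_mul, hcos]
  -- Part 1
  have h1 : vf α 0 = smax α := by
    rw [vf, smax]
    congr 1
    have hn : df α - Af α 0 - Bf α 0 - Cf α 0 = -4 * Real.sin α ^ 2 := by
      simp only [df, Af, Bf, Cf, Real.sin_zero, Real.cos_zero, mul_zero, Real.sin_two_mul]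
      linear_combination (-4*Real.sin α^2) * hs2
    have hd : ef α - Af α 0 + Bf α 0 = 4 * (1 + c^2) := by
      simp only [ef, Af, Bf, Real.sin_zero, Real.cos_zero, mul_zero,
        Real.sin_two_mul, Real.cos_two_mul, show (4:ℝ)*α = 2*(2*α) by ring]
      linear_combination (8*c^2) * hs2
    rw [hn, hd]
    field_simp
    ring
  have h4 : Real.sin α ^ 4 = (1 - c^2)^2 := by
    rw [show Real.sin α ^ 4 = (Real.sin α ^ 2)^2 by ring, hs2]
  have h2m : Real.sin (2*α) ^ 2 = 4*c^2*(1-c^2) := by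
    rw [Real.sin_two_mul]; linear_combination (4*c^2) * hs2
  -- Part 2
  have h2 : vf α (smax α) = smax α := by
    have hn : df α - Af α (smax α) - Bf α (smax α) - Cf α (smax α)
        = -4 * (1 - c^2) * (3*c^2 - 1)^2 / (1+c^2)^2 := by
      simp only [df, Af, Bf, Cf, hsin, hcos, hcos2, h4, h2m, hs2]
      field_simp
      ring
    have hd : ef α - Af α (smax α) + Bf α (smax α) = 4 * (3*c^2 - 1)^2 / (1+c^2) := by
      simp only [ef, Af, Bf, hsin, hcos, h2m, hs2, Real.cos_two_mul,
        show (4:ℝ)*α = 2*(2*α) by ring]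
      field_simp
      ring
    have hne : (3*c^2 - 1) ≠ 0 := by nlinarith
    rw [vf, hn, hd]
    rw [show -4 * (1 - c^2) * (3*c^2 - 1)^2 / (1+c^2)^2 / (4 * (3*c^2 - 1)^2 / (1+c^2))
        = -(Real.sin α)^2 / (1+c^2) from by rw [hs2]; rw [div_eq_div_iff (by positivity) (by positivity)]; field_simp]
    rw [smax, ← hcdef]
  exact ⟨h1, h2⟩
end
end

section
/- Let 0 < α < π/4 and β = π/4, and write c := cos θ(α) = (3cos²α − 1)/(1+cos²α) and s := sin θ(α) = −2√2·sin α·cos α/(1+cos²α). Then the matrix exponentials at time s_max are exactly: exp(s_max·X_{++}) = [[0,−1,0],[c,0,s],[−s,0,c]]; exp(s_max·X_{+−}) = [[0,−c,−s],[1,0,0],[0,−s,c]]; exp(s_max·X_{−−}) = [[0,−1,0],[c,0,−s],[s,0,c]]; exp(s_max·X_{−+}) = [[0,−c,s],[1,0,0],[0,s,c]]. -/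
set_option maxHeartbeats 1000000

open MeasureTheory Matrix Real
open scoped Nat

noncomputable section

lemma pow_odd_of_cube_s16 (X : Matrix (Fin 3) (Fin 3) ℝ) (h : X ^ 3 = -X) (k : ℕ) :
    X ^ (2 * k + 1) = ((-1 : ℝ) ^ k) • X := by
  induction k with
  | zero => simp
  | succ n ih =>
    have e : 2 * (n + 1) + 1 = (2 * n + 1) + 2 := by ring
    rw [e, pow_add, ih, smul_mul_assoc, ← pow_succ']
    have e3 : (2:ℕ) + 1 = 3 := rfl
    rw [e3, h, smul_neg, pow_succ]
    rw [mul_neg_one, neg_smul]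

lemma pow_even_of_cube_s16 (X : Matrix (Fin 3) (Fin 3) ℝ) (h : X ^ 3 = -X) (k : ℕ) :
    X ^ (2 * k + 2) = ((-1 : ℝ) ^ k) • X ^ 2 := by
  have e : 2 * k + 2 = (2 * k + 1) + 1 := by ring
  rw [e, pow_succ, pow_odd_of_cube_s16 X h, smul_mul_assoc, ← pow_two]

lemma exp_rodrigues (X : Matrix (Fin 3) (Fin 3) ℝ) (h : X ^ 3 = -X) (t : ℝ) :
    NormedSpace.exp (t • X) = 1 + Real.sin t • X + (1 - Real.cos t) • X ^ 2 := by
  rw [NormedSpace.exp_eq_tsum ℝ]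
  refine HasSum.tsum_eq ?_
  have hodd : HasSum (fun k : ℕ => (((2 * k + 1)! : ℝ))⁻¹ • (t • X) ^ (2 * k + 1))
      (Real.sin t • X) := by
    have h1 := (Real.hasSum_sin t).smul_const X
    have he : (fun k : ℕ => (((2 * k + 1)! : ℝ))⁻¹ • (t • X) ^ (2 * k + 1))
        = fun n : ℕ => ((-1 : ℝ) ^ n * t ^ (2 * n + 1) / ((2 * n + 1)! : ℝ)) • X := by
      funext k
      rw [smul_pow, pow_odd_of_cube_s16 X h, smul_smul, smul_smul]
      congr 1
      ring
    rw [he]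
    exact h1
  have heven : HasSum (fun k : ℕ => (((2 * k)! : ℝ))⁻¹ • (t • X) ^ (2 * k))
      (1 + (1 - Real.cos t) • X ^ 2) := by
    have hc := Real.hasSum_cos t
    have hc2 := (hasSum_nat_add_iff'
      (f := fun n : ℕ => (-1 : ℝ) ^ n * t ^ (2 * n) / ((2 * n)! : ℝ)) 1).mpr hc
    simp only [Finset.range_one, Finset.sum_singleton] at hc2
    norm_num at hc2
    have hc3 := (hc2.neg).smul_const (X ^ 2)
    refine (hasSum_nat_add_iff'
      (f := fun k : ℕ => (((2 * k)! : ℝ))⁻¹ • (t • X) ^ (2 * k)) 1).mp ?_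
    simp only [Finset.range_one, Finset.sum_singleton]
    norm_num
    convert hc3 using 1
    · rfl
    · funext n
      have e : 2 * (n + 1) = 2 * n + 2 := by ring
      rw [e, smul_pow, pow_even_of_cube_s16 X h, smul_smul, smul_smul]
      congr 1
      ring
    · rw [neg_sub, sub_smul, one_smul]
  have htot := HasSum.even_add_odd (f := fun n : ℕ => ((n ! : ℝ))⁻¹ • (t • X) ^ n) heven hodd
  convert htot using 1
  · rfl
  · abel

lemma cube_gen (a b e1 e2 : ℝ) (hb : a^2 + 2*b^2 = 1) (h1 : e1^2 = 1) (h2 : e2^2 = 1) :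
    (!![0,-a,-(e2*b); a,0,-(e1*b); e2*b,e1*b,0] : Matrix (Fin 3) (Fin 3) ℝ) ^ 3
      = -!![0,-a,-(e2*b); a,0,-(e1*b); e2*b,e1*b,0] := by
  ext i j
  fin_cases i <;> fin_cases j <;>
    simp [pow_succ, Matrix.mul_apply, Fin.sum_univ_three]
  · ring
  · linear_combination a*hb + a*b^2*h1 + a*b^2*h2
  · linear_combination e2*b*hb + e2*b^3*h1 + e2*b^3*h2
  · linear_combination -a*hb - a*b^2*h1 - a*b^2*h2
  · ring
  · linear_combination e1*b*hb + e1*b^3*h1 + e1*b^3*h2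
  · linear_combination (-(e2*b))*hb - e2*b^3*h1 - e2*b^3*h2
  · linear_combination (-(e1*b))*hb - e1*b^3*h1 - e1*b^3*h2
  · ring

lemma rod_matrix (a b e1 e2 S C : ℝ) (hb : a^2 + 2*b^2 = 1) (h1 : e1^2 = 1) (h2 : e2^2 = 1)
    (hS : S = 2*a/(1+a^2)) (hC : C = -((1-a^2)/(1+a^2))) :
    (1 : Matrix (Fin 3) (Fin 3) ℝ) + S • !![0,-a,-(e2*b); a,0,-(e1*b); e2*b,e1*b,0]
      + (1-C) • (!![0,-a,-(e2*b); a,0,-(e1*b); e2*b,e1*b,0] : Matrix (Fin 3) (Fin 3) ℝ) ^ 2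
    = !![0, -((2*a^2 + e1*e2*(1-a^2))/(1+a^2)), 2*a*b*(e1-e2)/(1+a^2);
        (2*a^2 - e1*e2*(1-a^2))/(1+a^2), 0, -(2*a*b*(e1+e2))/(1+a^2);
        2*a*b*(e1+e2)/(1+a^2), 2*a*b*(e1-e2)/(1+a^2), (3*a^2-1)/(1+a^2)] := by
  subst hS hC
  have h' : 1 + a * a ≠ 0 := by nlinarith [sq_nonneg a]
  ext i j
  fin_cases i <;> fin_cases j <;>
    simp [pow_two, Matrix.mul_apply, Fin.sum_univ_three, Matrix.one_apply] <;>
    field_simp [h']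
  · linear_combination -hb - 2*b^2*h2
  · linear_combination (-(e1*e2))*hb
  · ring
  · linear_combination (-(e1*e2))*hb
  · linear_combination -hb - 2*b^2*h1
  · ring
  · ring
  · ring
  · linear_combination -2*hb - 2*b^2*h1 - 2*b^2*h2

lemma cos_smax (α : ℝ) : Real.cos (smax α)
    = -((1 - (Real.cos α)^2)/(1 + (Real.cos α)^2)) := by
  have hs := Real.sin_sq_add_cos_sq α
  have hd : (0:ℝ) < 1 + (Real.cos α)^2 := by positivity
  rw [smax, Real.cos_arccos]
  · rw [Real.sin_sq]
    ring
  · rw [le_div_iff₀ hd]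
    nlinarith [sq_nonneg (Real.sin α), sq_nonneg (Real.cos α)]
  · apply div_le_one_of_le₀ <;> nlinarith [sq_nonneg (Real.sin α)]

lemma sin_smax (α : ℝ) (h0 : 0 ≤ Real.cos α) : Real.sin (smax α)
    = 2 * Real.cos α / (1 + (Real.cos α)^2) := by
  have hs := Real.sin_sq_add_cos_sq α
  have hd : (0:ℝ) < 1 + (Real.cos α)^2 := by positivity
  rw [smax, Real.sin_arccos]
  rw [show 1 - (-(Real.sin α)^2 / (1 + (Real.cos α)^2))^2
      = (2 * Real.cos α / (1 + (Real.cos α)^2))^2 from by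
    field_simp
    nlinarith]
  exact Real.sqrt_sq (by positivity)

lemma exp_case (α a b : ℝ) (ha : a = Real.cos α) (hbd : b = Real.sin α * (Real.sqrt 2 / 2))
    (h0 : 0 ≤ Real.cos α) (e1 e2 : ℝ) (h1 : e1^2 = 1) (h2 : e2^2 = 1) :
    NormedSpace.exp (smax α • !![0,-a,-(e2*b); a,0,-(e1*b); e2*b,e1*b,0])
      = !![0, -((2*a^2 + e1*e2*(1-a^2))/(1+a^2)), 2*a*b*(e1-e2)/(1+a^2);
          (2*a^2 - e1*e2*(1-a^2))/(1+a^2), 0, -(2*a*b*(e1+e2))/(1+a^2);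
          2*a*b*(e1+e2)/(1+a^2), 2*a*b*(e1-e2)/(1+a^2), (3*a^2-1)/(1+a^2)] := by
  have hb : a^2 + 2*b^2 = 1 := by
    subst ha hbd
    have h2' : Real.sqrt 2 ^ 2 = 2 := Real.sq_sqrt (by norm_num)
    nlinarith [Real.sin_sq_add_cos_sq α]
  rw [exp_rodrigues _ (cube_gen a b e1 e2 hb h1 h2), sin_smax α h0, cos_smax α, ← ha]
  exact rod_matrix a b e1 e2 _ _ hb h1 h2 rfl rfl

theorem exp_smax_formulas
    (α : ℝ) (hα : 0 < α) (hα' : α < π/4)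
    (c s : ℝ)
    (hc : c = (3 * (Real.cos α)^2 - 1) / (1 + (Real.cos α)^2))
    (hs : s = -2 * Real.sqrt 2 * Real.sin α * Real.cos α / (1 + (Real.cos α)^2)) :
    NormedSpace.exp (smax α • (Fm α + G1m α (π/4) + G2m α (π/4)))
      = !![0,-1,0; c,0,s; -s,0,c] ∧
    NormedSpace.exp (smax α • (Fm α + G1m α (π/4) - G2m α (π/4)))
      = !![0,-c,-s; 1,0,0; 0,-s,c] ∧
    NormedSpace.exp (smax α • (Fm α - G1m α (π/4) - G2m α (π/4)))
      = !![0,-1,0; c,0,-s; s,0,c] ∧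
    NormedSpace.exp (smax α • (Fm α - G1m α (π/4) + G2m α (π/4)))
      = !![0,-c,s; 1,0,0; 0,s,c] := by
  have hpi := Real.pi_pos
  have hcpos : 0 < Real.cos α := by
    apply Real.cos_pos_of_mem_Ioo
    constructor <;> [linarith; linarith]
  have h0 : 0 ≤ Real.cos α := le_of_lt hcpos
  have hD : (1 + (Real.cos α)^2) ≠ 0 := by positivity
  have hm1 : Fm α + G1m α (π/4) + G2m α (π/4)
      = !![0, -Real.cos α, -((1:ℝ)*(Real.sin α * (Real.sqrt 2/2)));
          Real.cos α, 0, -((1:ℝ)*(Real.sin α * (Real.sqrt 2/2)));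
          (1:ℝ)*(Real.sin α * (Real.sqrt 2/2)), (1:ℝ)*(Real.sin α * (Real.sqrt 2/2)), 0] := by
    rw [Fm, G1m, G2m, Real.sin_pi_div_four, Real.cos_pi_div_four, J1, J2, J3]
    ext i j
    fin_cases i <;> fin_cases j <;>
      simp [Matrix.vecHead, Matrix.vecTail] <;> ring
  refine ⟨?_, ?_, ?_, ?_⟩
  · rw [hm1, exp_case α _ _ rfl rfl h0 1 1 (by norm_num) (by norm_num), hc, hs]
    ext i j
    fin_cases i <;> fin_cases j <;> simp <;> field_simp <;> ring
  · have hm2 : Fm α + G1m α (π/4) - G2m α (π/4)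
        = !![0, -Real.cos α, -((-1:ℝ)*(Real.sin α * (Real.sqrt 2/2)));
          Real.cos α, 0, -((1:ℝ)*(Real.sin α * (Real.sqrt 2/2)));
          (-1:ℝ)*(Real.sin α * (Real.sqrt 2/2)), (1:ℝ)*(Real.sin α * (Real.sqrt 2/2)), 0] := by
      rw [Fm, G1m, G2m, Real.sin_pi_div_four, Real.cos_pi_div_four, J1, J2, J3]
      ext i j
      fin_cases i <;> fin_cases j <;>
        simp [Matrix.vecHead, Matrix.vecTail] <;> ring
    rw [hm2, exp_case α _ _ rfl rfl h0 1 (-1) (by norm_num) (by norm_num), hc, hs]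
    ext i j
    fin_cases i <;> fin_cases j <;> simp <;> field_simp <;> ring
  · have hm3 : Fm α - G1m α (π/4) - G2m α (π/4)
        = !![0, -Real.cos α, -((-1:ℝ)*(Real.sin α * (Real.sqrt 2/2)));
          Real.cos α, 0, -((-1:ℝ)*(Real.sin α * (Real.sqrt 2/2)));
          (-1:ℝ)*(Real.sin α * (Real.sqrt 2/2)), (-1:ℝ)*(Real.sin α * (Real.sqrt 2/2)), 0] := by
      rw [Fm, G1m, G2m, Real.sin_pi_div_four, Real.cos_pi_div_four, J1, J2, J3]
      ext i j
      fin_cases i <;> fin_cases j <;>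
        simp [Matrix.vecHead, Matrix.vecTail] <;> ring
    rw [hm3, exp_case α _ _ rfl rfl h0 (-1) (-1) (by norm_num) (by norm_num), hc, hs]
    ext i j
    fin_cases i <;> fin_cases j <;> simp <;> field_simp <;> ring
  · have hm4 : Fm α - G1m α (π/4) + G2m α (π/4)
        = !![0, -Real.cos α, -((1:ℝ)*(Real.sin α * (Real.sqrt 2/2)));
          Real.cos α, 0, -((-1:ℝ)*(Real.sin α * (Real.sqrt 2/2)));
          (1:ℝ)*(Real.sin α * (Real.sqrt 2/2)), (-1:ℝ)*(Real.sin α * (Real.sqrt 2/2)), 0] := by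
      rw [Fm, G1m, G2m, Real.sin_pi_div_four, Real.cos_pi_div_four, J1, J2, J3]
      ext i j
      fin_cases i <;> fin_cases j <;>
        simp [Matrix.vecHead, Matrix.vecTail] <;> ring
    rw [hm4, exp_case α _ _ rfl rfl h0 (-1) 1 (by norm_num) (by norm_num), hc, hs]
    ext i j
    fin_cases i <;> fin_cases j <;> simp <;> field_simp <;> ring
end
end
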